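/- arXiv:2008.08229 — 6 statements merged into one kernel-verified Lean document; each statement's English description precedes it below -/
import Mathlib

section
/- (Newhouse thickness theorem.) Let K_1 and K_2 be Cantor sets (nonempty, compact, perfect, nowhere dense subsets of ℝ) each with convex hull [0,1]. If τ(K_1) ≥ 1 and τ(K_2) ≥ 1, then the arithmetic sum K_1 + K_2 = {x + y : x ∈ K_1, y ∈ K_2} is the closed interval [0,2]. -/
open Pointwise

/-- A Cantor set: a nonempty, compact, perfect, nowhere dense subset of `ℝ`. -/
def IsCantorSet (K : Set ℝ) : Prop :=
  K.Nonempty ∧ IsCompact K ∧ Perfect K ∧ IsNowhereDense K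

/-- `(u, v)` is a gap of `K`: a bounded connected component of `[inf K, sup K] \ K`,
recorded via its endpoints, which lie in `K`. -/
def IsGap (K : Set ℝ) (u v : ℝ) : Prop :=
  u < v ∧ u ∈ K ∧ v ∈ K ∧ Set.Ioo u v ∩ K = ∅

/-- Length of the left bridge of the gap `(u, v)` of `K`: the distance from `u` down to the
nearest right endpoint of a gap of length at least `v - u` lying left of `u`
(or to `inf K` if there is none). -/
noncomputable def leftBridgeLen (K : Set ℝ) (u v : ℝ) : ℝ :=
  u - sSup (insert (sInf K) {b | ∃ a, IsGap K a b ∧ v - u ≤ b - a ∧ b ≤ u})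

/-- Length of the right bridge of the gap `(u, v)` of `K`: the distance from `v` up to the
nearest left endpoint of a gap of length at least `v - u` lying right of `v`
(or to `sup K` if there is none). -/
noncomputable def rightBridgeLen (K : Set ℝ) (u v : ℝ) : ℝ :=
  sInf (insert (sSup K) {a | ∃ b, IsGap K a b ∧ v - u ≤ b - a ∧ v ≤ a}) - v

/-- The Newhouse thickness of `K`: the infimum over all gaps `G = (u,v)` of
`min(|left bridge of G|, |right bridge of G|) / |G|`. -/
noncomputable def thickness (K : Set ℝ) : ℝ :=
  sInf {r | ∃ u v, IsGap K u v ∧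
    r = min (leftBridgeLen K u v) (rightBridgeLen K u v) / (v - u)}

namespace NewhouseAux

/-- If two gaps have `b < b'`, they are disjoint: `b ≤ a'`. -/
lemma gap_sep {K : Set ℝ} {a b a' b' : ℝ} (h1 : IsGap K a b) (h2 : IsGap K a' b')
    (h : b < b') : b ≤ a' := by
  by_contra h'
  push_neg at h'
  rcases lt_trichotomy a a' with hh | hh | hh
  · have : a' ∈ Set.Ioo a b ∩ K := ⟨⟨hh, h'⟩, h2.2.1⟩
    rw [h1.2.2.2] at this; exact this
  · have : b ∈ Set.Ioo a' b' ∩ K := ⟨⟨hh ▸ h1.1, h⟩, h1.2.2.1⟩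
    rw [h2.2.2.2] at this; exact this
  · have : a ∈ Set.Ioo a' b' ∩ K := ⟨⟨hh, lt_trans h1.1 h⟩, h1.2.1⟩
    rw [h2.2.2.2] at this; exact this

/-- A gap is determined by its right endpoint. -/
lemma gap_right_inj {K : Set ℝ} {a b a' : ℝ} (h1 : IsGap K a b) (h2 : IsGap K a' b) :
    a = a' := by
  rcases lt_trichotomy a a' with hh | hh | hh
  · have hmem : a' ∈ Set.Ioo a b ∩ K := ⟨⟨hh, h2.1⟩, h2.2.1⟩
    rw [h1.2.2.2] at hmem; exact hmem.elim
  · exact hh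
  · have hmem : a ∈ Set.Ioo a' b ∩ K := ⟨⟨hh, h1.1⟩, h1.2.1⟩
    rw [h2.2.2.2] at hmem; exact hmem.elim

/-- A point not in a compact set, with points of the set on both sides, lies in a gap. -/
lemma exists_gap {K : Set ℝ} (hK : IsCompact K) {p q x : ℝ}
    (hp : p ∈ K) (hq : q ∈ K) (hx : x ∉ K) (hpx : p < x) (hxq : x < q) :
    ∃ u v, IsGap K u v ∧ p ≤ u ∧ u < x ∧ x < v ∧ v ≤ q := by
  have hLc : IsCompact (K ∩ Set.Iic x) := hK.inter_right isClosed_Iic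
  have hRc : IsCompact (K ∩ Set.Ici x) := hK.inter_right isClosed_Ici
  have hLne : (K ∩ Set.Iic x).Nonempty := ⟨p, hp, hpx.le⟩
  have hRne : (K ∩ Set.Ici x).Nonempty := ⟨q, hq, hxq.le⟩
  set u := sSup (K ∩ Set.Iic x) with hu
  set v := sInf (K ∩ Set.Ici x) with hv
  have huK := hLc.sSup_mem hLne
  have hvK := hRc.sInf_mem hRne
  have hux : u < x := lt_of_le_of_ne huK.2 (fun h => hx (h ▸ huK.1))
  have hxv : x < v := lt_of_le_of_ne hvK.2 (fun h => hx (h ▸ hvK.1))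
  refine ⟨u, v, ⟨lt_trans hux hxv, huK.1, hvK.1, ?_⟩,
    le_csSup hLc.bddAbove ⟨hp, hpx.le⟩, hux, hxv, csInf_le hRc.bddBelow ⟨hq, hxq.le⟩⟩
  ext z
  simp only [Set.mem_inter_iff, Set.mem_Ioo, Set.mem_empty_iff_false, iff_false, not_and]
  rintro ⟨hz1, hz2⟩ hzK
  rcases le_or_gt z x with h | h
  · exact absurd (le_csSup hLc.bddAbove ⟨hzK, h⟩) (not_le.mpr hz1)
  · exact absurd (csInf_le hRc.bddBelow ⟨hzK, h.le⟩) (not_le.mpr hz2)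

/-- Left-bridge property extracted from thickness. -/
def LG (K : Set ℝ) : Prop := ∀ u v, IsGap K u v →
  ∃ c ∈ K, c ≤ u - (v - u) ∧ ∀ a b, IsGap K a b → c < b → b ≤ u → b - a < v - u

/-- Right-bridge property extracted from thickness. -/
def RG (K : Set ℝ) : Prop := ∀ u v, IsGap K u v →
  ∃ c ∈ K, v + (v - u) ≤ c ∧ ∀ a b, IsGap K a b → v ≤ a → a < c → b - a < v - u

lemma bridges_ge {K : Set ℝ} (ht : 1 ≤ thickness K) {u v : ℝ} (hg : IsGap K u v) :
    v - u ≤ leftBridgeLen K u v ∧ v - u ≤ rightBridgeLen K u v := by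
  set S := {r | ∃ u v, IsGap K u v ∧
    r = min (leftBridgeLen K u v) (rightBridgeLen K u v) / (v - u)} with hS
  have hr : min (leftBridgeLen K u v) (rightBridgeLen K u v) / (v - u) ∈ S := ⟨u, v, hg, rfl⟩
  have h1 : (1 : ℝ) ≤ min (leftBridgeLen K u v) (rightBridgeLen K u v) / (v - u) := by
    by_cases hbdd : BddBelow S
    · exact le_trans ht (csInf_le hbdd hr)
    · rw [thickness, ← hS, Real.sInf_of_not_bddBelow hbdd] at ht; linarith
  have huv : 0 < v - u := sub_pos.2 hg.1
  rw [le_div_iff₀ huv, one_mul] at h1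
  exact ⟨le_trans h1 (min_le_left _ _), le_trans h1 (min_le_right _ _)⟩

lemma lg_of_thickness {K : Set ℝ} (hK : IsCompact K) (hne : K.Nonempty)
    (ht : 1 ≤ thickness K) : LG K := by
  intro u v hg
  have hlen : v - u ≤ leftBridgeLen K u v := (bridges_ge ht hg).1
  set T := insert (sInf K) {b | ∃ a, IsGap K a b ∧ v - u ≤ b - a ∧ b ≤ u} with hT
  have hTK : T ⊆ K := by
    rintro x (rfl | ⟨a', hga, _, _⟩)
    · exact hK.sInf_mem hne
    · exact hga.2.2.1
  have hTne : T.Nonempty := ⟨_, Set.mem_insert _ _⟩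
  have hTbdd : BddAbove T := hK.bddAbove.mono hTK
  have hcK : sSup T ∈ K :=
    (hK.isClosed.closure_subset_iff.mpr hTK) (csSup_mem_closure hTne hTbdd)
  refine ⟨sSup T, hcK, ?_, ?_⟩
  · rw [leftBridgeLen, ← hT] at hlen; linarith
  · intro a b hg' hlt hle
    by_contra h'
    push_neg at h'
    exact absurd (le_csSup hTbdd (Set.mem_insert_of_mem _ ⟨a, hg', h', hle⟩))
      (not_le.mpr hlt)

lemma rg_of_thickness {K : Set ℝ} (hK : IsCompact K) (hne : K.Nonempty)
    (ht : 1 ≤ thickness K) : RG K := by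
  intro u v hg
  have hlen : v - u ≤ rightBridgeLen K u v := (bridges_ge ht hg).2
  set T := insert (sSup K) {a | ∃ b, IsGap K a b ∧ v - u ≤ b - a ∧ v ≤ a} with hT
  have hTK : T ⊆ K := by
    rintro x (rfl | ⟨b', hgb, _, _⟩)
    · exact hK.sSup_mem hne
    · exact hgb.2.1
  have hTne : T.Nonempty := ⟨_, Set.mem_insert _ _⟩
  have hTbdd : BddBelow T := hK.bddBelow.mono hTK
  have hcK : sInf T ∈ K :=
    (hK.isClosed.closure_subset_iff.mpr hTK) (csInf_mem_closure hTne hTbdd)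
  refine ⟨sInf T, hcK, ?_, ?_⟩
  · rw [rightBridgeLen, ← hT] at hlen; linarith
  · intro a b hg' hle hlt
    by_contra h'
    push_neg at h'
    exact absurd (csInf_le hTbdd (Set.mem_insert_of_mem _ ⟨b, hg', h', hle⟩))
      (not_le.mpr hlt)

/-- Gaps transfer under the reflection `x ↦ t - x`. -/
lemma gap_reflect {K : Set ℝ} {t a b : ℝ} (h : IsGap ((fun x => t - x) '' K) a b) :
    IsGap K (t - b) (t - a) := by
  obtain ⟨hab, ⟨ya, hya, hya'⟩, ⟨yb, hyb, hyb'⟩, hempty⟩ := h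
  have hya2 : t - ya = a := hya'
  have hyb2 : t - yb = b := hyb'
  refine ⟨by linarith, ?_, ?_, ?_⟩
  · have : t - b = yb := by linarith
    rwa [this]
  · have : t - a = ya := by linarith
    rwa [this]
  · ext z
    simp only [Set.mem_inter_iff, Set.mem_Ioo, Set.mem_empty_iff_false, iff_false, not_and]
    rintro ⟨hz1, hz2⟩ hzK
    have : t - z ∈ Set.Ioo a b ∩ (fun x => t - x) '' K :=
      ⟨⟨by linarith, by linarith⟩, z, hzK, rfl⟩
    rw [hempty] at this; exact this

lemma lg_reflect {K : Set ℝ} {t : ℝ} (h : RG K) : LG ((fun x => t - x) '' K) := by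
  intro u v hg
  obtain ⟨c, hcK, hcle, hsm⟩ := h (t - v) (t - u) (gap_reflect hg)
  refine ⟨t - c, ⟨c, hcK, rfl⟩, by linarith, ?_⟩
  intro a b hg' hlt hle
  have := hsm (t - b) (t - a) (gap_reflect hg') (by linarith) (by linarith)
  linarith

lemma rg_reflect {K : Set ℝ} {t : ℝ} (h : LG K) : RG ((fun x => t - x) '' K) := by
  intro u v hg
  obtain ⟨c, hcK, hcle, hsm⟩ := h (t - v) (t - u) (gap_reflect hg)
  refine ⟨t - c, ⟨c, hcK, rfl⟩, by linarith, ?_⟩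
  intro a b hg' hle hlt
  have := hsm (t - b) (t - a) (gap_reflect hg') (by linarith) (by linarith)
  linarith

/-- The set of gaps of a compact set of length at least `δ > 0` is finite. -/
lemma gaps_finite {K : Set ℝ} (hK : IsCompact K) {δ : ℝ} (hδ : 0 < δ) :
    {p : ℝ × ℝ | IsGap K p.1 p.2 ∧ δ ≤ p.2 - p.1}.Finite := by
  obtain ⟨m, hm⟩ := hK.bddBelow
  obtain ⟨M, hM⟩ := hK.bddAbove
  apply Set.Finite.of_finite_image (f := fun p : ℝ × ℝ => ⌊p.2 / δ⌋)
  · apply Set.Finite.subset (Set.finite_Icc ⌊m / δ⌋ ⌊M / δ⌋)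
    rintro _ ⟨p, ⟨hg, _⟩, rfl⟩
    have h1 : m ≤ p.2 := hm hg.2.2.1
    have h2 : p.2 ≤ M := hM hg.2.2.1
    exact ⟨Int.floor_le_floor ((div_le_div_iff_of_pos_right hδ).mpr h1),
      Int.floor_le_floor ((div_le_div_iff_of_pos_right hδ).mpr h2)⟩
  · rintro p ⟨hp, hpδ⟩ q ⟨hq, hqδ⟩ hfeq
    have habs : |p.2 - q.2| < δ := by
      have h1 : |p.2 / δ - q.2 / δ| < 1 := Int.abs_sub_lt_one_of_floor_eq_floor hfeq
      rw [div_sub_div_same, abs_div, abs_of_pos hδ, div_lt_one hδ] at h1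
      exact h1
    have h2 : p.2 = q.2 := by
      rcases lt_trichotomy p.2 q.2 with hh | hh | hh
      · have := gap_sep hp hq hh
        rw [abs_sub_comm, abs_of_pos (by linarith [hp.1, hq.1] : (0:ℝ) < q.2 - p.2)] at habs
        linarith
      · exact hh
      · have := gap_sep hq hp hh
        rw [abs_of_pos (by linarith [hp.1, hq.1] : (0:ℝ) < p.2 - q.2)] at habs
        linarith
    have h1 : p.1 = q.1 := gap_right_inj hp (h2 ▸ hq)
    exact Prod.ext h1 h2

/-- `s` is the total length of a linked pair of gaps, with the `A`-gap on the left. -/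
def SumLinked (A B : Set ℝ) (s : ℝ) : Prop :=
  ∃ a b c d, IsGap A a b ∧ IsGap B c d ∧ a < c ∧ c < b ∧ b < d ∧ s = (b - a) + (d - c)

/-- The key step: a linked pair produces a linked pair of strictly smaller total length. -/
lemma step {A B : Set ℝ} (hA : IsCompact A) (hB : IsCompact B)
    (hdisj : ∀ x ∈ A, x ∉ B) (hRA : RG A) (hLB : LG B) {s : ℝ}
    (h : SumLinked A B s) : ∃ s', SumLinked B A s' ∧ s' < s := by
  obtain ⟨a, b, c, d, hab, hcd, hac, hcb, hbd, rfl⟩ := h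
  rcases le_or_gt (b - a) (d - c) with hle | hlt
  · obtain ⟨e, heB, hee, hsmall⟩ := hLB c d hcd
    have hea : e < a := by linarith
    have haB : a ∉ B := hdisj a hab.2.1
    obtain ⟨v₁, v₂, hV, hv₁e, hv₁a, hav₂, hv₂c⟩ := exists_gap hB heB hcd.2.1 haB hea hac
    have hlenV : v₂ - v₁ < d - c := hsmall v₁ v₂ hV (by linarith) hv₂c
    exact ⟨(v₂ - v₁) + (b - a), ⟨v₁, v₂, a, b, hV, hab, hv₁a, hav₂,
      lt_of_le_of_lt hv₂c hcb, rfl⟩, by linarith⟩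
  · obtain ⟨e, heA, hee, hsmall⟩ := hRA a b hab
    have hde : d < e := by linarith
    have hdA : d ∉ A := fun hmem => hdisj d hmem hcd.2.2.1
    obtain ⟨w₁, w₂, hW, hbw₁, hw₁d, hdw₂, hw₂e⟩ := exists_gap hA hab.2.2.1 heA hdA hbd hde
    have hlenW : w₂ - w₁ < b - a := hsmall w₁ w₂ hW hbw₁ (by linarith)
    exact ⟨(d - c) + (w₂ - w₁), ⟨c, d, w₁, w₂, hcd, hW, lt_of_lt_of_le hcb hbw₁,
      hw₁d, hdw₂, rfl⟩, by linarith⟩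

/-- Disjoint compact sets satisfying the bridge conditions cannot have a linked pair of gaps. -/
lemma no_linked {A B : Set ℝ} (hA : IsCompact A) (hB : IsCompact B)
    (hdisj : ∀ x ∈ A, x ∉ B)
    (hLA : LG A) (hRA : RG A) (hLB : LG B) (hRB : RG B)
    {a b c d : ℝ} (hab : IsGap A a b) (hcd : IsGap B c d)
    (h1 : a < c) (h2 : c < b) (h3 : b < d) : False := by
  have hdisj' : ∀ x ∈ B, x ∉ A := fun x hx hx' => hdisj x hx' hx
  have hBne : B.Nonempty := ⟨c, hcd.2.1⟩
  -- a positive separation between A and B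
  obtain ⟨x₀, hx₀A, hmin⟩ := hA.exists_isMinOn ⟨a, hab.2.1⟩
    (Metric.continuous_infDist_pt B).continuousOn
  set δ := Metric.infDist x₀ B with hδdef
  have hδ : 0 < δ := (hB.isClosed.notMem_iff_infDist_pos hBne).1 (hdisj x₀ hx₀A)
  have hsep : ∀ x ∈ A, ∀ y ∈ B, δ ≤ |x - y| := by
    intro x hx y hy
    calc δ ≤ Metric.infDist x B := hmin hx
    _ ≤ dist x y := Metric.infDist_le_dist_of_mem hy
    _ = |x - y| := Real.dist_eq x y
  -- the set of total lengths of linked pairs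
  set S := {s | SumLinked A B s ∨ SumLinked B A s} with hSdef
  have hSne : S.Nonempty := ⟨(b - a) + (d - c), Or.inl ⟨a, b, c, d, hab, hcd, h1, h2, h3, rfl⟩⟩
  have hSfin : S.Finite := by
    have hGA := gaps_finite hA hδ
    have hGB := gaps_finite hB hδ
    apply Set.Finite.subset (((hGA.prod hGB).union (hGB.prod hGA)).image
      (fun pq : (ℝ × ℝ) × (ℝ × ℝ) => (pq.1.2 - pq.1.1) + (pq.2.2 - pq.2.1)))
    rintro s (⟨a', b', c', d', hg1, hg2, hk1, hk2, hk3, rfl⟩ |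
              ⟨a', b', c', d', hg1, hg2, hk1, hk2, hk3, rfl⟩)
    · have hbc : δ ≤ b' - c' := by
        have := hsep b' hg1.2.2.1 c' hg2.2.1
        rwa [abs_of_pos (by linarith)] at this
      exact ⟨((a', b'), (c', d')), Or.inl ⟨⟨hg1, by linarith⟩, ⟨hg2, by linarith⟩⟩, rfl⟩
    · have hbc : δ ≤ b' - c' := by
        have := hsep c' hg2.2.1 b' hg1.2.2.1
        rwa [abs_sub_comm, abs_of_pos (by linarith)] at this
      exact ⟨((a', b'), (c', d')), Or.inr ⟨⟨hg1, by linarith⟩, ⟨hg2, by linarith⟩⟩, rfl⟩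
  have hmem : sInf S ∈ S := Set.Nonempty.csInf_mem hSne hSfin
  rcases hmem with hs | hs
  · obtain ⟨s', hs', hlt⟩ := step hA hB hdisj hRA hLB hs
    exact absurd (csInf_le hSfin.bddBelow (Or.inr hs' : s' ∈ S)) (not_le.mpr hlt)
  · obtain ⟨s', hs', hlt⟩ := step hB hA hdisj' hRB hLA hs
    exact absurd (csInf_le hSfin.bddBelow (Or.inl hs' : s' ∈ S)) (not_le.mpr hlt)

end NewhouseAux

open NewhouseAux in
/-- **Newhouse thickness theorem.** If `K₁, K₂` are Cantor sets with convex hull `[0,1]`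
and both have thickness at least `1`, then `K₁ + K₂ = [0, 2]`. -/
theorem newhouse_thickness (K₁ K₂ : Set ℝ)
    (h₁ : IsCantorSet K₁) (h₂ : IsCantorSet K₂)
    (hc₁ : convexHull ℝ K₁ = Set.Icc 0 1) (hc₂ : convexHull ℝ K₂ = Set.Icc 0 1)
    (ht₁ : 1 ≤ thickness K₁) (ht₂ : 1 ≤ thickness K₂) :
    K₁ + K₂ = Set.Icc 0 2 := by
  obtain ⟨hK₁ne, hK₁c, -, -⟩ := h₁
  obtain ⟨hK₂ne, hK₂c, -, -⟩ := h₂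
  have hK₁sub : K₁ ⊆ Set.Icc 0 1 := by rw [← hc₁]; exact subset_convexHull ℝ K₁
  have hK₂sub : K₂ ⊆ Set.Icc 0 1 := by rw [← hc₂]; exact subset_convexHull ℝ K₂
  -- endpoints belong to the sets
  have hend : ∀ K : Set ℝ, K.Nonempty → IsCompact K → K ⊆ Set.Icc 0 1 →
      convexHull ℝ K = Set.Icc 0 1 → (0 : ℝ) ∈ K ∧ (1 : ℝ) ∈ K := by
    intro K hne hc hsub hch
    constructor
    · have hi := hc.sInf_mem hne
      have h0le : 0 ≤ sInf K := le_csInf hne (fun x hx => (hsub hx).1)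
      have hle0 : sInf K ≤ 0 := by
        by_contra hgt
        push_neg at hgt
        have hsub' : K ⊆ Set.Icc (sInf K) 1 :=
          fun x hx => ⟨csInf_le hc.bddBelow hx, (hsub hx).2⟩
        have : convexHull ℝ K ⊆ Set.Icc (sInf K) 1 := convexHull_min hsub' (convex_Icc _ _)
        rw [hch] at this
        have h0 := this (Set.mem_Icc.mpr ⟨le_refl 0, zero_le_one⟩)
        exact absurd h0.1 (not_le.mpr hgt)
      have : sInf K = 0 := le_antisymm hle0 h0le
      rwa [this] at hi
    · have hi := hc.sSup_mem hne
      have h1le : sSup K ≤ 1 := csSup_le hne (fun x hx => (hsub hx).2)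
      have hle1 : 1 ≤ sSup K := by
        by_contra hgt
        push_neg at hgt
        have hsub' : K ⊆ Set.Icc 0 (sSup K) :=
          fun x hx => ⟨(hsub hx).1, le_csSup hc.bddAbove hx⟩
        have : convexHull ℝ K ⊆ Set.Icc 0 (sSup K) := convexHull_min hsub' (convex_Icc _ _)
        rw [hch] at this
        have h1 := this (Set.mem_Icc.mpr ⟨zero_le_one, le_refl 1⟩)
        exact absurd h1.2 (not_le.mpr hgt)
      have : sSup K = 1 := le_antisymm h1le hle1
      rwa [this] at hi
  obtain ⟨h10, h11⟩ := hend K₁ hK₁ne hK₁c hK₁sub hc₁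
  obtain ⟨h20, h21⟩ := hend K₂ hK₂ne hK₂c hK₂sub hc₂
  apply Set.Subset.antisymm
  · intro x hx
    rw [Set.mem_add] at hx
    obtain ⟨p, hp, q, hq, rfl⟩ := hx
    exact ⟨add_nonneg (hK₁sub hp).1 (hK₂sub hq).1, by
      have := (hK₁sub hp).2; have := (hK₂sub hq).2; linarith⟩
  · intro t ht
    by_contra htK
    set B := (fun x => t - x) '' K₂ with hBdef
    have hE : ∀ x ∈ K₁, x ∉ B := by
      rintro x hx ⟨y, hy, hxy⟩
      have hxy2 : t - y = x := hxy
      exact htK (Set.mem_add.mpr ⟨x, hx, y, hy, by linarith⟩)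
    have hBc : IsCompact B := hK₂c.image (continuous_const.sub continuous_id)
    have htB : t ∈ B := ⟨0, h20, by simp⟩
    have ht1B : t - 1 ∈ B := ⟨1, h21, rfl⟩
    have hBsub : B ⊆ Set.Icc (t - 1) t := by
      rintro _ ⟨y, hy, rfl⟩
      show t - y ∈ Set.Icc (t - 1) t
      exact ⟨by linarith [(hK₂sub hy).2], by linarith [(hK₂sub hy).1]⟩
    have hLK₁ := lg_of_thickness hK₁c hK₁ne ht₁
    have hRK₁ := rg_of_thickness hK₁c hK₁ne ht₁
    have hLB : LG B := lg_reflect (rg_of_thickness hK₂c hK₂ne ht₂)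
    have hRB : RG B := rg_reflect (lg_of_thickness hK₂c hK₂ne ht₂)
    have hdisjB : ∀ x ∈ B, x ∉ K₁ := fun x hx hx' => hE x hx' hx
    rcases le_or_gt t 1 with ht1 | ht1
    · -- 0 ≤ t ≤ 1
      have h0B : (0 : ℝ) ∉ B := hE 0 h10
      have ht0 : 0 < t := by
        rcases eq_or_lt_of_le ht.1 with h | h
        · exact absurd (⟨0, h20, by simp [← h]⟩ : (0:ℝ) ∈ B) h0B
        · exact h
      have ht1' : t < 1 := by
        rcases eq_or_lt_of_le ht1 with h | h
        · exact absurd (⟨1, h21, by rw [h]; ring⟩ : (0:ℝ) ∈ B) h0B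
        · exact h
      obtain ⟨c, d, hgB, hc1, hc2, hc3, hc4⟩ :=
        exists_gap hBc ht1B htB h0B (by linarith) ht0
      have hdK₁ : d ∉ K₁ := fun hmem => hE d hmem hgB.2.2.1
      obtain ⟨a', b', hgA, ha1, ha2, ha3, ha4⟩ :=
        exists_gap hK₁c h10 h11 hdK₁ hc3 (lt_of_le_of_lt hc4 ht1')
      exact no_linked hBc hK₁c hdisjB hLB hRB hLK₁ hRK₁ hgB hgA
        (by linarith) ha2 ha3
    · -- 1 < t ≤ 2
      have h1B : (1 : ℝ) ∉ B := hE 1 h11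
      have ht2 : t < 2 := by
        rcases eq_or_lt_of_le ht.2 with h | h
        · exact absurd (⟨1, h21, by rw [h]; ring⟩ : (1:ℝ) ∈ B) h1B
        · exact h
      obtain ⟨c, d, hgB, hc1, hc2, hc3, hc4⟩ :=
        exists_gap hBc ht1B htB h1B (by linarith) ht1
      have hcK₁ : c ∉ K₁ := fun hmem => hE c hmem hgB.2.1
      obtain ⟨a', b', hgA, ha1, ha2, ha3, ha4⟩ :=
        exists_gap hK₁c h10 h11 hcK₁ (by linarith) hc2
      exact no_linked hK₁c hBc hE hLK₁ hRK₁ hLB hRB hgA hgB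
        ha2 ha3 (by linarith)
end

section
/- Let K_1 and K_2 be Cantor sets (nonempty, compact, perfect, nowhere dense subsets of ℝ) each with convex hull [0,1]. If τ(K_1) · τ(K_2) > 1, then the set of nonlinear continuously differentiable functions f : ℝ² → ℝ such that f(K_1, K_2) = {f(x,y) : x ∈ K_1, y ∈ K_2} is a (nondegenerate closed) interval, is uncountable. -/
open Pointwise Set

lemma NH.csSup_refl (t : ℝ) {X : Set ℝ} (hne : X.Nonempty) (hbdd : BddBelow X) :
    sSup ((fun x => t - x) '' X) = t - sInf X := by
  refine IsLUB.csSup_eq ?_ (hne.image _)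
  constructor
  · rintro _ ⟨x, hx, rfl⟩
    simp only [sub_le_sub_iff_left]
    exact csInf_le hbdd hx
  · intro u hu
    have : ∀ x ∈ X, t - u ≤ x := by
      intro x hx
      have h := hu ⟨x, hx, rfl⟩
      simp only at h
      linarith
    have := le_csInf hne this
    linarith

lemma NH.csInf_refl (t : ℝ) {X : Set ℝ} (hne : X.Nonempty) (hbdd : BddAbove X) :
    sInf ((fun x => t - x) '' X) = t - sSup X := by
  refine IsGLB.csInf_eq ?_ (hne.image _)
  constructor
  · rintro _ ⟨x, hx, rfl⟩
    simp only [sub_le_sub_iff_left]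
    exact le_csSup hbdd hx
  · intro u hu
    have : ∀ x ∈ X, x ≤ t - u := by
      intro x hx
      have h := hu ⟨x, hx, rfl⟩
      simp only at h
      linarith
    have := csSup_le hne this
    linarith

lemma NH.exists_gap {B : Set ℝ} (hB : IsCompact B) (hne : B.Nonempty) {x : ℝ}
    (hx : x ∉ B) (h1 : sInf B < x) (h2 : x < sSup B) :
    ∃ a b, IsGap B a b ∧ a < x ∧ x < b := by
  have hIic : (B ∩ Iic x).Nonempty := ⟨sInf B, hB.sInf_mem hne, le_of_lt h1⟩
  have hIci : (B ∩ Ici x).Nonempty := ⟨sSup B, hB.sSup_mem hne, le_of_lt h2⟩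
  have hcIic : IsCompact (B ∩ Iic x) := hB.inter_right isClosed_Iic
  have hcIci : IsCompact (B ∩ Ici x) := hB.inter_right isClosed_Ici
  set a := sSup (B ∩ Iic x) with ha
  set b := sInf (B ∩ Ici x) with hb
  have haMem : a ∈ B ∩ Iic x := hcIic.sSup_mem hIic
  have hbMem : b ∈ B ∩ Ici x := hcIci.sInf_mem hIci
  have hax : a < x := lt_of_le_of_ne haMem.2 (fun h => hx (h ▸ haMem.1))
  have hxb : x < b := lt_of_le_of_ne hbMem.2 (fun h => hx (h ▸ hbMem.1))
  refine ⟨a, b, ⟨hax.trans hxb, haMem.1, hbMem.1, ?_⟩, hax, hxb⟩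
  ext y
  simp only [mem_inter_iff, mem_Ioo, mem_empty_iff_false, iff_false, not_and]
  rintro ⟨hay, hyb⟩ hyB
  rcases le_or_gt y x with h | h
  · exact absurd (le_csSup hcIic.bddAbove ⟨hyB, h⟩) (not_le.2 hay)
  · exact absurd (csInf_le hcIci.bddBelow ⟨hyB, h.le⟩) (not_le.2 hyb)

lemma NH.leftW_bddAbove {K : Set ℝ} (hbb : BddBelow K) {u v : ℝ} (hu : u ∈ K) :
    ∀ x ∈ insert (sInf K) {b | ∃ a, IsGap K a b ∧ v - u ≤ b - a ∧ b ≤ u}, x ≤ u := by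
  rintro x (rfl | ⟨a, _, _, hle⟩)
  · exact csInf_le hbb hu
  · exact hle

lemma NH.rightW_bddBelow {K : Set ℝ} (hba : BddAbove K) {u v : ℝ} (hv : v ∈ K) :
    ∀ x ∈ insert (sSup K) {a | ∃ b, IsGap K a b ∧ v - u ≤ b - a ∧ v ≤ a}, v ≤ x := by
  rintro x (rfl | ⟨b, _, _, hle⟩)
  · exact le_csSup hba hv
  · exact hle

lemma NH.bridge_nonneg {K : Set ℝ} (hbb : BddBelow K) (hba : BddAbove K)
    {u v : ℝ} (hg : IsGap K u v) :
    0 ≤ leftBridgeLen K u v ∧ 0 ≤ rightBridgeLen K u v := by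
  constructor
  · have := csSup_le (insert_nonempty _ _) (NH.leftW_bddAbove hbb (v := v) hg.2.1)
    simp only [leftBridgeLen]; linarith
  · have := le_csInf (insert_nonempty _ _) (NH.rightW_bddBelow hba (u := u) hg.2.2.1)
    simp only [rightBridgeLen]; linarith

lemma NH.thickness_nonneg {K : Set ℝ} (hbb : BddBelow K) (hba : BddAbove K) :
    0 ≤ thickness K := by
  apply Real.sInf_nonneg
  rintro r ⟨u, v, hg, rfl⟩
  have h := NH.bridge_nonneg hbb hba hg
  exact div_nonneg (le_min h.1 h.2) (by linarith [hg.1])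

lemma NH.thickness_le {K : Set ℝ} (hbb : BddBelow K) (hba : BddAbove K)
    {u v : ℝ} (hg : IsGap K u v) :
    thickness K * (v - u) ≤ min (leftBridgeLen K u v) (rightBridgeLen K u v) := by
  have hvu : 0 < v - u := by linarith [hg.1]
  have hbdd : BddBelow {r | ∃ u v, IsGap K u v ∧
      r = min (leftBridgeLen K u v) (rightBridgeLen K u v) / (v - u)} := by
    refine ⟨0, ?_⟩
    rintro r ⟨u', v', hg', rfl⟩
    have h := NH.bridge_nonneg hbb hba hg'
    exact div_nonneg (le_min h.1 h.2) (by linarith [hg'.1])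
  have := csInf_le hbdd ⟨u, v, hg, rfl⟩
  rw [thickness]
  calc sInf _ * (v - u) ≤ (min (leftBridgeLen K u v) (rightBridgeLen K u v) / (v - u)) * (v - u) :=
        mul_le_mul_of_nonneg_right this hvu.le
    _ = _ := div_mul_cancel₀ _ hvu.ne'

lemma NH.right_step {B : Set ℝ} (hB : IsCompact B) (hne : B.Nonempty)
    {q₁ q₂ : ℝ} (hgap : IsGap B q₁ q₂) {x : ℝ} (hx : x ∉ B)
    (h1 : q₂ < x) (h2 : x < q₂ + rightBridgeLen B q₁ q₂) :
    ∃ a b, IsGap B a b ∧ q₂ ≤ a ∧ a < x ∧ x < b ∧ b - a < q₂ - q₁ := by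
  set W := insert (sSup B) {a | ∃ b, IsGap B a b ∧ q₂ - q₁ ≤ b - a ∧ q₂ ≤ a} with hW
  have hWb : ∀ y ∈ W, q₂ ≤ y := NH.rightW_bddBelow hB.bddAbove hgap.2.2.1
  have hxW : x < sInf W := by
    have : rightBridgeLen B q₁ q₂ = sInf W - q₂ := rfl
    linarith
  have hxS : x < sSup B := lt_of_lt_of_le hxW (csInf_le ⟨q₂, hWb⟩ (mem_insert _ _))
  have hxI : sInf B < x := lt_of_le_of_lt (csInf_le hB.bddBelow hgap.2.2.1) h1
  obtain ⟨a, b, hg, hax, hxb⟩ := NH.exists_gap hB hne hx hxI hxS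
  have hq₂a : q₂ ≤ a := by
    by_contra hlt
    push_neg at hlt
    rcases lt_or_ge q₂ x with _ | h
    · have : q₂ ∈ Ioo a b ∩ B := ⟨⟨hlt, h1.trans hxb⟩, hgap.2.2.1⟩
      rw [hg.2.2.2] at this; exact this
    · linarith
  have hlen : b - a < q₂ - q₁ := by
    by_contra hge
    push_neg at hge
    have : a ∈ W := mem_insert_of_mem _ ⟨b, hg, hge, hq₂a⟩
    have := csInf_le ⟨q₂, hWb⟩ this
    linarith
  exact ⟨a, b, hg, hq₂a, hax, hxb, hlen⟩

lemma NH.left_step {B : Set ℝ} (hB : IsCompact B) (hne : B.Nonempty)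
    {q₁ q₂ : ℝ} (hgap : IsGap B q₁ q₂) {x : ℝ} (hx : x ∉ B)
    (h1 : q₁ - leftBridgeLen B q₁ q₂ < x) (h2 : x < q₁) :
    ∃ a b, IsGap B a b ∧ a < x ∧ x < b ∧ b ≤ q₁ ∧ b - a < q₂ - q₁ := by
  set W := insert (sInf B) {b | ∃ a, IsGap B a b ∧ q₂ - q₁ ≤ b - a ∧ b ≤ q₁} with hW
  have hWb : ∀ y ∈ W, y ≤ q₁ := NH.leftW_bddAbove hB.bddBelow hgap.2.1
  have hxW : sSup W < x := by
    have : leftBridgeLen B q₁ q₂ = q₁ - sSup W := rfl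
    linarith
  have hxI : sInf B < x := lt_of_le_of_lt (le_csSup ⟨q₁, hWb⟩ (mem_insert _ _)) hxW
  have hxS : x < sSup B := lt_of_lt_of_le h2 (le_csSup hB.bddAbove hgap.2.1)
  obtain ⟨a, b, hg, hax, hxb⟩ := NH.exists_gap hB hne hx hxI hxS
  have hbq₁ : b ≤ q₁ := by
    by_contra hlt
    push_neg at hlt
    have : q₁ ∈ Ioo a b ∩ B := ⟨⟨hax.trans h2, hlt⟩, hgap.2.1⟩
    rw [hg.2.2.2] at this; exact this
  have hlen : b - a < q₂ - q₁ := by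
    by_contra hge
    push_neg at hge
    have : b ∈ W := mem_insert_of_mem _ ⟨a, hg, hge, hbq₁⟩
    have := le_csSup ⟨q₁, hWb⟩ this
    linarith
  exact ⟨a, b, hg, hax, hxb, hbq₁, hlen⟩

def NH.Linked (A B : Set ℝ) (p q : ℝ × ℝ) : Prop :=
  IsGap A p.1 p.2 ∧ IsGap B q.1 q.2 ∧ p.1 < q.1 ∧ q.1 < p.2 ∧ p.2 < q.2

lemma NH.step {A B : Set ℝ} (hA : IsCompact A) (hB : IsCompact B)
    (hAne : A.Nonempty) (hBne : B.Nonempty) (hdisj : A ∩ B = ∅)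
    {τA τB : ℝ} (hτA : 0 ≤ τA) (hτB : 0 ≤ τB) (hτ : 1 < τA * τB)
    (hbA : ∀ u v, IsGap A u v → τA * (v - u) ≤ min (leftBridgeLen A u v) (rightBridgeLen A u v))
    (hbB : ∀ u v, IsGap B u v → τB * (v - u) ≤ min (leftBridgeLen B u v) (rightBridgeLen B u v))
    {p q : ℝ × ℝ} (h : NH.Linked A B p q) :
    ∃ q' p', NH.Linked B A q' p' ∧
      (q'.2 - q'.1) + (p'.2 - p'.1) < (p.2 - p.1) + (q.2 - q.1) := by
  obtain ⟨hgP, hgQ, h1, h2, h3⟩ := h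
  have hPpos : 0 < p.2 - p.1 := by linarith [hgP.1]
  have hQpos : 0 < q.2 - q.1 := by linarith [hgQ.1]
  have hdicho : q.2 - q.1 < τA * (p.2 - p.1) ∨ p.2 - p.1 < τB * (q.2 - q.1) := by
    by_contra hcon
    push_neg at hcon
    nlinarith [hcon.1, hcon.2]
  rcases hdicho with hcase | hcase
  · -- right bridge of P (gap of A) captures q.2
    have hq2A : q.2 ∉ A := fun hmem => by
      have : q.2 ∈ A ∩ B := ⟨hmem, hgQ.2.2.1⟩
      rw [hdisj] at this; exact this
    have hbr : q.2 - q.1 < rightBridgeLen A p.1 p.2 :=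
      lt_of_lt_of_le hcase ((hbA p.1 p.2 hgP).trans (min_le_right _ _))
    obtain ⟨a, b, hg, hpa, hax, hxb, hlen⟩ :=
      NH.right_step hA hAne hgP hq2A (by linarith) (by linarith)
    refine ⟨q, (a, b), ⟨hgQ, hg, lt_of_lt_of_le h2 hpa, hax, hxb⟩, ?_⟩
    change q.2 - q.1 + (b - a) < _
    linarith
  · -- left bridge of Q (gap of B) captures p.1
    have hp1B : p.1 ∉ B := fun hmem => by
      have : p.1 ∈ A ∩ B := ⟨hgP.2.1, hmem⟩
      rw [hdisj] at this; exact this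
    have hbl : p.2 - p.1 < leftBridgeLen B q.1 q.2 :=
      lt_of_lt_of_le hcase ((hbB q.1 q.2 hgQ).trans (min_le_left _ _))
    obtain ⟨a, b, hg, hax, hxb, hbq, hlen⟩ :=
      NH.left_step hB hBne hgQ hp1B (by linarith) h1
    refine ⟨(a, b), p, ⟨hg, hgP, hax, hxb, lt_of_le_of_lt hbq h2⟩, ?_⟩
    change b - a + (p.2 - p.1) < _
    linarith

lemma NH.finite_sep {S : Set ℝ} {d lo hi : ℝ} (hd : 0 < d) (hS : S ⊆ Set.Icc lo hi)
    (hsep : ∀ x ∈ S, ∀ y ∈ S, x ≠ y → d < |x - y|) : S.Finite := by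
  have hinj : Set.InjOn (fun x => ⌊x / d⌋) S := by
    intro x hx y hy hxy
    by_contra hne
    have h1 := Int.floor_le (x / d)
    have h2 := Int.lt_floor_add_one (x / d)
    have h3 := Int.floor_le (y / d)
    have h4 := Int.lt_floor_add_one (y / d)
    simp only at hxy
    rw [hxy] at h1 h2
    have l1 : (⌊y / d⌋ : ℝ) * d ≤ x := (le_div_iff₀ hd).1 h1
    have l2 : x < ((⌊y / d⌋ : ℝ) + 1) * d := (div_lt_iff₀ hd).1 h2
    have l3 : (⌊y / d⌋ : ℝ) * d ≤ y := (le_div_iff₀ hd).1 h3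
    have l4 : y < ((⌊y / d⌋ : ℝ) + 1) * d := (div_lt_iff₀ hd).1 h4
    have habs : |x - y| < d := by
      rw [abs_sub_lt_iff]
      constructor <;> linarith
    exact absurd habs (not_lt.2 (hsep x hx y hy hne).le)
  have himg : (fun x => ⌊x / d⌋) '' S ⊆ Set.Icc ⌊lo / d⌋ ⌊hi / d⌋ := by
    rintro _ ⟨x, hx, rfl⟩
    have := hS hx
    exact ⟨Int.floor_le_floor (by gcongr; exact this.1), Int.floor_le_floor (by gcongr; exact this.2)⟩
  exact Set.Finite.of_finite_image ((Set.finite_Icc _ _).subset himg) hinj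

lemma NH.gap_unique {K : Set ℝ} {u v v' : ℝ} (h : IsGap K u v) (h' : IsGap K u v') : v = v' := by
  by_contra hne
  rcases lt_or_gt_of_ne hne with hlt | hlt
  · have : v ∈ Ioo u v' ∩ K := ⟨⟨h.1, hlt⟩, h.2.2.1⟩
    rw [h'.2.2.2] at this; exact this
  · have : v' ∈ Ioo u v ∩ K := ⟨⟨h'.1, hlt⟩, h'.2.2.1⟩
    rw [h.2.2.2] at this; exact this

lemma NH.finite_lengths {K : Set ℝ} (hK : IsCompact K) (hne : K.Nonempty) {d : ℝ} (hd : 0 < d) :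
    {l : ℝ | ∃ u v, IsGap K u v ∧ d < v - u ∧ l = v - u}.Finite := by
  set P : Set (ℝ × ℝ) := {z | IsGap K z.1 z.2 ∧ d < z.2 - z.1} with hP
  have hinj : Set.InjOn Prod.fst P := by
    rintro ⟨u, v⟩ ⟨hg, _⟩ ⟨u', v'⟩ ⟨hg', _⟩ h
    simp only at h
    subst h
    exact Prod.ext rfl (NH.gap_unique hg hg')
  have hEfin : (Prod.fst '' P).Finite := by
    apply NH.finite_sep hd (lo := sInf K) (hi := sSup K)
    · rintro _ ⟨⟨u, v⟩, ⟨hg, _⟩, rfl⟩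
      exact ⟨csInf_le hK.bddBelow hg.2.1, le_csSup hK.bddAbove hg.2.1⟩
    · rintro _ ⟨⟨u, v⟩, ⟨hg, hdl⟩, rfl⟩ _ ⟨⟨u', v'⟩, ⟨hg', hdl'⟩, rfl⟩ hne'
      simp only at hne' ⊢
      rcases lt_or_gt_of_ne hne' with hlt | hlt
      · -- u < u', so u' ≥ v (u' ∈ K, not in gap (u,v), u' > u)
        have : u' ∉ Ioo u v := fun hmem => by
          have : u' ∈ Ioo u v ∩ K := ⟨hmem, hg'.2.1⟩
          rw [hg.2.2.2] at this; exact this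
        simp only [mem_Ioo, not_and, not_lt] at this
        have := this hlt
        rw [abs_of_neg (show u - u' < 0 by linarith)]
        simp only at hdl
        linarith
      · have : u ∉ Ioo u' v' := fun hmem => by
          have : u ∈ Ioo u' v' ∩ K := ⟨hmem, hg.2.1⟩
          rw [hg'.2.2.2] at this; exact this
        simp only [mem_Ioo, not_and, not_lt] at this
        have := this hlt
        rw [abs_of_pos (show 0 < u - u' by linarith)]
        simp only at hdl'
        linarith
  have hPfin : P.Finite := Set.Finite.of_finite_image hEfin hinj
  have : {l : ℝ | ∃ u v, IsGap K u v ∧ d < v - u ∧ l = v - u} ⊆ (fun z : ℝ × ℝ => z.2 - z.1) '' P := by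
    rintro l ⟨u, v, hg, hdl, rfl⟩
    exact ⟨(u, v), ⟨hg, hdl⟩, rfl⟩
  exact (hPfin.image _).subset this

lemma NH.initial {A B : Set ℝ} (hA : IsCompact A) (hB : IsCompact B)
    (hAne : A.Nonempty) (hBne : B.Nonempty) (hdisj : A ∩ B = ∅)
    (h1 : sInf B ≤ sInf A) (h2 : sInf A < sSup B) (h3 : sSup B ≤ sSup A) :
    ∃ q p, NH.Linked B A q p := by
  have hα : sInf A ∈ A := hA.sInf_mem hAne
  have hαB : sInf A ∉ B := fun hmem => by
    have : sInf A ∈ A ∩ B := ⟨hα, hmem⟩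
    rw [hdisj] at this; exact this
  have h1' : sInf B < sInf A := lt_of_le_of_ne h1 (fun h => hαB (h ▸ hB.sInf_mem hBne))
  obtain ⟨q₁, q₂, hgQ, hq1, hq2⟩ := NH.exists_gap hB hBne hαB h1' h2
  -- q₂ ∈ B, q₂ ∉ A, sInf A < q₂, q₂ < sSup A
  have hq₂A : q₂ ∉ A := fun hmem => by
    have : q₂ ∈ A ∩ B := ⟨hmem, hgQ.2.2.1⟩
    rw [hdisj] at this; exact this
  have hq₂S : q₂ < sSup A := by
    have : q₂ ≤ sSup B := le_csSup hB.bddAbove hgQ.2.2.1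
    rcases lt_or_eq_of_le (this.trans h3) with h | h
    · exact h
    · exact absurd (h ▸ hA.sSup_mem hAne) hq₂A
  obtain ⟨p₁, p₂, hgP, hp1, hp2⟩ := NH.exists_gap hA hAne hq₂A hq2 hq₂S
  have hp₁ : q₁ < p₁ := lt_of_lt_of_le hq1 (csInf_le hA.bddBelow hgP.2.1)
  exact ⟨(q₁, q₂), (p₁, p₂), hgQ, hgP, hp₁, hp1, hp2⟩

lemma NH.inter_nonempty {A B : Set ℝ} (hA : IsCompact A) (hB : IsCompact B)
    (hAne : A.Nonempty) (hBne : B.Nonempty)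
    {τA τB : ℝ} (hτA : 0 ≤ τA) (hτB : 0 ≤ τB) (hτ : 1 < τA * τB)
    (hbA : ∀ u v, IsGap A u v → τA * (v - u) ≤ min (leftBridgeLen A u v) (rightBridgeLen A u v))
    (hbB : ∀ u v, IsGap B u v → τB * (v - u) ≤ min (leftBridgeLen B u v) (rightBridgeLen B u v))
    (h1 : sInf B ≤ sInf A) (h2 : sInf A < sSup B) (h3 : sSup B ≤ sSup A) :
    (A ∩ B).Nonempty := by
  by_contra hcon
  have hdisj : A ∩ B = ∅ := Set.not_nonempty_iff_eq_empty.1 hcon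
  -- positive separation
  obtain ⟨a₀, ha₀, hmin'⟩ := hA.exists_isMinOn hAne (Metric.continuous_infDist_pt B).continuousOn
  have hmin : ∀ a ∈ A, Metric.infDist a₀ B ≤ Metric.infDist a B := fun a ha => hmin' ha
  set d := Metric.infDist a₀ B with hd
  have hdpos : 0 < d := by
    rw [hd]
    rw [← (hB.isClosed.notMem_iff_infDist_pos hBne)]
    intro hmem
    have : a₀ ∈ A ∩ B := ⟨ha₀, hmem⟩
    rw [hdisj] at this; exact this
  have hsep : ∀ a ∈ A, ∀ b ∈ B, d ≤ |a - b| := by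
    intro a ha b hb
    calc d ≤ Metric.infDist a B := hmin a ha
      _ ≤ dist a b := Metric.infDist_le_dist_of_mem hb
      _ = |a - b| := Real.dist_eq a b
  -- every linked pair has gap lengths > d
  have hlen : ∀ p q : ℝ × ℝ, (NH.Linked A B p q ∨ NH.Linked B A p q) →
      d < p.2 - p.1 ∧ d < q.2 - q.1 := by
    rintro p q (⟨hgP, hgQ, l1, l2, l3⟩ | ⟨hgP, hgQ, l1, l2, l3⟩)
    · have := hsep p.2 hgP.2.2.1 q.1 hgQ.2.1
      rw [abs_of_pos (by linarith)] at this
      constructor <;> linarith [hgP.1, hgQ.1]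
    · have := hsep q.1 hgQ.2.1 p.2 hgP.2.2.1
      rw [abs_of_neg (by linarith)] at this
      constructor <;> linarith [hgP.1, hgQ.1]
  -- the set of sums of linked pairs
  set L := {s : ℝ | ∃ p q : ℝ × ℝ, (NH.Linked A B p q ∨ NH.Linked B A p q) ∧
      s = (p.2 - p.1) + (q.2 - q.1)} with hL
  have hLne : L.Nonempty := by
    obtain ⟨q, p, hlink⟩ := NH.initial hA hB hAne hBne hdisj h1 h2 h3
    exact ⟨(p.2 - p.1) + (q.2 - q.1), q, p, Or.inr hlink, by ring⟩
  have hLfin : L.Finite := by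
    set lenA := {l : ℝ | ∃ u v, IsGap A u v ∧ d < v - u ∧ l = v - u} with hlenA
    set lenB := {l : ℝ | ∃ u v, IsGap B u v ∧ d < v - u ∧ l = v - u} with hlenB
    have hsub : L ⊆ Set.image2 (· + ·) (lenA ∪ lenB) (lenA ∪ lenB) := by
      rintro s ⟨p, q, hlink, rfl⟩
      obtain ⟨hdp, hdq⟩ := hlen p q hlink
      rcases hlink with ⟨hgP, hgQ, _⟩ | ⟨hgP, hgQ, _⟩
      · exact ⟨p.2 - p.1, Or.inl ⟨p.1, p.2, hgP, hdp, rfl⟩,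
          q.2 - q.1, Or.inr ⟨q.1, q.2, hgQ, hdq, rfl⟩, rfl⟩
      · exact ⟨p.2 - p.1, Or.inr ⟨p.1, p.2, hgP, hdp, rfl⟩,
          q.2 - q.1, Or.inl ⟨q.1, q.2, hgQ, hdq, rfl⟩, rfl⟩
    have hfA := NH.finite_lengths hA hAne hdpos
    have hfB := NH.finite_lengths hB hBne hdpos
    exact (Set.Finite.image2 _ (hfA.union hfB) (hfA.union hfB)).subset hsub
  obtain ⟨m, hmL, hmmin⟩ := Set.exists_min_image L id hLfin hLne
  obtain ⟨p, q, hlink, rfl⟩ := hmL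
  rcases hlink with hl | hl
  · obtain ⟨q', p', hl', hsum⟩ := NH.step hA hB hAne hBne hdisj hτA hτB hτ hbA hbB hl
    have : (q'.2 - q'.1) + (p'.2 - p'.1) ∈ L := ⟨q', p', Or.inr hl', rfl⟩
    have := hmmin _ this
    simp only [id] at this
    linarith
  · obtain ⟨q', p', hl', hsum⟩ := NH.step hB hA hBne hAne
      (by rw [Set.inter_comm]; exact hdisj) hτB hτA (by linarith [mul_comm τA τB]; ) hbB hbA hl
    have : (q'.2 - q'.1) + (p'.2 - p'.1) ∈ L := ⟨q', p', Or.inl hl', rfl⟩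
    have := hmmin _ this
    simp only [id] at this
    linarith

lemma NH.refl_refl (t : ℝ) (K : Set ℝ) : (fun x => t - x) '' ((fun x => t - x) '' K) = K := by
  ext y
  simp only [mem_image, exists_exists_and_eq_and]
  constructor
  · rintro ⟨x, hx, rfl⟩
    simpa using hx
  · intro hy
    exact ⟨y, hy, by ring⟩

lemma NH.gap_refl (t : ℝ) {K : Set ℝ} {u v : ℝ} (h : IsGap K u v) :
    IsGap ((fun x => t - x) '' K) (t - v) (t - u) := by
  obtain ⟨huv, hu, hv, hgap⟩ := h
  refine ⟨by linarith, ⟨v, hv, rfl⟩, ⟨u, hu, rfl⟩, ?_⟩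
  ext y
  simp only [mem_inter_iff, mem_Ioo, mem_image, mem_empty_iff_false, iff_false, not_and]
  rintro ⟨h1, h2⟩ ⟨x, hx, rfl⟩
  have : x ∈ Ioo u v ∩ K := ⟨⟨by linarith, by linarith⟩, hx⟩
  rw [hgap] at this; exact this

lemma NH.gap_refl_iff (t : ℝ) {K : Set ℝ} {u v : ℝ} :
    IsGap ((fun x => t - x) '' K) u v ↔ IsGap K (t - v) (t - u) := by
  constructor
  · intro h
    have := NH.gap_refl t h
    rwa [NH.refl_refl] at this
  · intro h
    have := NH.gap_refl t h
    simpa using this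

lemma NH.leftBridge_refl (t : ℝ) {K : Set ℝ} (hK : IsCompact K) (hne : K.Nonempty)
    {u v : ℝ} (h : IsGap ((fun x => t - x) '' K) u v) :
    leftBridgeLen ((fun x => t - x) '' K) u v = rightBridgeLen K (t - v) (t - u) := by
  set B := (fun x => t - x) '' K with hB
  have hset : insert (sInf B) {b | ∃ a, IsGap B a b ∧ v - u ≤ b - a ∧ b ≤ u} =
      (fun x => t - x) '' insert (sSup K)
        {a | ∃ b, IsGap K a b ∧ (t - u) - (t - v) ≤ b - a ∧ t - u ≤ a} := by
    rw [Set.image_insert_eq]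
    congr 1
    · rw [hB, NH.csInf_refl t hne hK.bddAbove]
    · ext x
      simp only [mem_setOf_eq, mem_image]
      constructor
      · rintro ⟨a, hg, hle, hxu⟩
        refine ⟨t - x, ⟨t - a, ?_, by linarith, by linarith⟩, by ring⟩
        rw [← NH.gap_refl_iff t] at *
        convert hg using 2 <;> ring
      · rintro ⟨a₂, ⟨b₂, hg, hle, hua⟩, rfl⟩
        refine ⟨t - b₂, ?_, by linarith, by linarith⟩
        rw [NH.gap_refl_iff t]
        convert hg using 1 <;> ring
  have hbdd : BddBelow (insert (sSup K)
      {a | ∃ b, IsGap K a b ∧ (t - u) - (t - v) ≤ b - a ∧ t - u ≤ a}) := by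
    refine ⟨min (sSup K) (t - u), ?_⟩
    rintro x (rfl | ⟨b, _, _, hle⟩)
    · exact min_le_left _ _
    · exact le_trans (min_le_right _ _) hle
  rw [leftBridgeLen, hset, NH.csSup_refl t (insert_nonempty _ _) hbdd, rightBridgeLen]
  ring

lemma NH.rightBridge_refl (t : ℝ) {K : Set ℝ} (hK : IsCompact K) (hne : K.Nonempty)
    {u v : ℝ} (h : IsGap ((fun x => t - x) '' K) u v) :
    rightBridgeLen ((fun x => t - x) '' K) u v = leftBridgeLen K (t - v) (t - u) := by
  set B := (fun x => t - x) '' K with hB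
  have hset : insert (sSup B) {a | ∃ b, IsGap B a b ∧ v - u ≤ b - a ∧ v ≤ a} =
      (fun x => t - x) '' insert (sInf K)
        {b | ∃ a, IsGap K a b ∧ (t - u) - (t - v) ≤ b - a ∧ b ≤ t - v} := by
    rw [Set.image_insert_eq]
    congr 1
    · rw [hB, NH.csSup_refl t hne hK.bddBelow]
    · ext x
      simp only [mem_setOf_eq, mem_image]
      constructor
      · rintro ⟨b, hg, hle, hxv⟩
        refine ⟨t - x, ⟨t - b, ?_, by linarith, by linarith⟩, by ring⟩
        rw [← NH.gap_refl_iff t] at *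
        convert hg using 2 <;> ring
      · rintro ⟨b₂, ⟨a₂, hg, hle, hbv⟩, rfl⟩
        refine ⟨t - a₂, ?_, by linarith, by linarith⟩
        rw [NH.gap_refl_iff t]
        convert hg using 1 <;> ring
  have hbdd : BddAbove (insert (sInf K)
      {b | ∃ a, IsGap K a b ∧ (t - u) - (t - v) ≤ b - a ∧ b ≤ t - v}) := by
    refine ⟨max (sInf K) (t - v), ?_⟩
    rintro x (rfl | ⟨a, _, _, hle⟩)
    · exact le_max_left _ _
    · exact le_trans hle (le_max_right _ _)
  rw [rightBridgeLen, hset, NH.csInf_refl t (insert_nonempty _ _) hbdd, leftBridgeLen]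
  ring

-- hull facts
lemma NH.hull_facts {K : Set ℝ} (hK : IsCompact K) (hne : K.Nonempty)
    (hc : convexHull ℝ K = Set.Icc 0 1) :
    K ⊆ Set.Icc 0 1 ∧ sInf K = 0 ∧ sSup K = 1 ∧ (0 : ℝ) ∈ K ∧ (1 : ℝ) ∈ K := by
  have hsub : K ⊆ Set.Icc 0 1 := hc ▸ subset_convexHull ℝ K
  have hbb : BddBelow K := ⟨0, fun x hx => (hsub hx).1⟩
  have hba : BddAbove K := ⟨1, fun x hx => (hsub hx).2⟩
  have hIcc : convexHull ℝ K ⊆ Set.Icc (sInf K) (sSup K) := by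
    apply convexHull_min _ (convex_Icc _ _)
    intro x hx
    exact ⟨csInf_le hbb hx, le_csSup hba hx⟩
  rw [hc] at hIcc
  have h0 := hIcc ⟨le_refl 0, zero_le_one⟩
  have h1 := hIcc ⟨zero_le_one, le_refl 1⟩
  have hi0 : sInf K = 0 := le_antisymm h0.1 (le_csInf hne fun x hx => (hsub hx).1)
  have hs1 : sSup K = 1 := le_antisymm (csSup_le hne fun x hx => (hsub hx).2) h1.2
  exact ⟨hsub, hi0, hs1, hi0 ▸ hK.sInf_mem hne, hs1 ▸ hK.sSup_mem hne⟩

lemma NH.sum_image {K₁ K₂ : Set ℝ} (hK₁ : IsCompact K₁) (hK₂ : IsCompact K₂)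
    (hne₁ : K₁.Nonempty) (hne₂ : K₂.Nonempty)
    (hc₁ : convexHull ℝ K₁ = Set.Icc 0 1) (hc₂ : convexHull ℝ K₂ = Set.Icc 0 1)
    (ht : 1 < thickness K₁ * thickness K₂) :
    (fun p : ℝ × ℝ => p.1 + p.2) '' (K₁ ×ˢ K₂) = Set.Icc 0 2 := by
  obtain ⟨hsub₁, hi₁, hs₁, h01, h11⟩ := NH.hull_facts hK₁ hne₁ hc₁
  obtain ⟨hsub₂, hi₂, hs₂, h02, h12⟩ := NH.hull_facts hK₂ hne₂ hc₂
  apply Set.Subset.antisymm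
  · rintro _ ⟨⟨x, y⟩, ⟨hx, hy⟩, rfl⟩
    have hx' := hsub₁ hx; have hy' := hsub₂ hy
    exact ⟨by simpa using add_nonneg hx'.1 hy'.1, by simp only; linarith [hx'.2, hy'.2]⟩
  intro t ⟨ht0, ht2⟩
  have hτ₁ : 0 ≤ thickness K₁ := NH.thickness_nonneg hK₁.bddBelow hK₁.bddAbove
  have hτ₂ : 0 ≤ thickness K₂ := NH.thickness_nonneg hK₂.bddBelow hK₂.bddAbove
  have hb₁ : ∀ u v, IsGap K₁ u v → thickness K₁ * (v - u) ≤
      min (leftBridgeLen K₁ u v) (rightBridgeLen K₁ u v) :=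
    fun u v hg => NH.thickness_le hK₁.bddBelow hK₁.bddAbove hg
  have hb₂ : ∀ u v, IsGap K₂ u v → thickness K₂ * (v - u) ≤
      min (leftBridgeLen K₂ u v) (rightBridgeLen K₂ u v) :=
    fun u v hg => NH.thickness_le hK₂.bddBelow hK₂.bddAbove hg
  rcases eq_or_lt_of_le ht0 with rfl | ht0'
  · exact ⟨(0, 0), ⟨h01, h02⟩, by norm_num⟩
  rcases eq_or_lt_of_le ht2 with rfl | ht2'
  · exact ⟨(1, 1), ⟨h11, h12⟩, by norm_num⟩
  -- B = t - K₂
  set B := (fun y => t - y) '' K₂ with hBdef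
  have hBcpt : IsCompact B := hK₂.image (continuous_const.sub continuous_id)
  have hBne : B.Nonempty := hne₂.image _
  have hBi : sInf B = t - 1 := by rw [hBdef, NH.csInf_refl t hne₂ hK₂.bddAbove, hs₂]
  have hBs : sSup B = t - 0 := by rw [hBdef, NH.csSup_refl t hne₂ hK₂.bddBelow, hi₂]
  have hbB : ∀ u v, IsGap B u v → thickness K₂ * (v - u) ≤
      min (leftBridgeLen B u v) (rightBridgeLen B u v) := by
    intro u v hg
    have hg' : IsGap K₂ (t - v) (t - u) := (NH.gap_refl_iff t).1 hg
    have := hb₂ _ _ hg'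
    rw [NH.leftBridge_refl t hK₂ hne₂ hg, NH.rightBridge_refl t hK₂ hne₂ hg, min_comm]
    calc thickness K₂ * (v - u) = thickness K₂ * ((t - u) - (t - v)) := by ring_nf
      _ ≤ _ := this
  have hgoal : (K₁ ∩ B).Nonempty := by
    rcases le_or_gt t 1 with hcase | hcase
    · apply NH.inter_nonempty hK₁ hBcpt hne₁ hBne hτ₁ hτ₂ ht hb₁ hbB
      · rw [hBi, hi₁]; linarith
      · rw [hi₁, hBs]; linarith
      · rw [hBs, hs₁]; linarith
    · have := NH.inter_nonempty hBcpt hK₁ hBne hne₁ hτ₂ hτ₁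
        (by rw [mul_comm]; exact ht) hbB hb₁
        (by rw [hBi, hi₁]; linarith) (by rw [hBi, hs₁]; linarith)
        (by rw [hs₁, hBs]; linarith)
      rw [Set.inter_comm] at this
      exact this
  obtain ⟨x, hx₁, y, hy₂, hxy⟩ := hgoal
  simp only at hxy
  exact ⟨(x, y), ⟨hx₁, hy₂⟩, by simp only; linarith⟩


/-- If `K₁, K₂` are Cantor sets with convex hull `[0,1]` and `τ(K₁) · τ(K₂) > 1`, then there are
uncountably many nonlinear `C¹` functions `f : ℝ² → ℝ` such that `f(K₁, K₂)` is a
(nondegenerate closed) interval. -/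
theorem uncountably_many_nonlinear (K₁ K₂ : Set ℝ)
    (h₁ : IsCantorSet K₁) (h₂ : IsCantorSet K₂)
    (hc₁ : convexHull ℝ K₁ = Set.Icc 0 1) (hc₂ : convexHull ℝ K₂ = Set.Icc 0 1)
    (ht : 1 < thickness K₁ * thickness K₂) :
    ¬ Set.Countable {f : ℝ × ℝ → ℝ | ContDiff ℝ 1 f ∧
      (¬ ∃ a b c : ℝ, ∀ p : ℝ × ℝ, f p = a * p.1 + b * p.2 + c) ∧
      ∃ a b : ℝ, a < b ∧ f '' K₁ ×ˢ K₂ = Set.Icc a b} := by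
  intro hcount
  set T := {f : ℝ × ℝ → ℝ | ContDiff ℝ 1 f ∧
      (¬ ∃ a b c : ℝ, ∀ p : ℝ × ℝ, f p = a * p.1 + b * p.2 + c) ∧
      ∃ a b : ℝ, a < b ∧ f '' K₁ ×ˢ K₂ = Set.Icc a b} with hT
  have hsum := NH.sum_image h₁.2.1 h₂.2.1 h₁.1 h₂.1 hc₁ hc₂ ht
  set F : ℝ → (ℝ × ℝ → ℝ) := fun c p => (p.1 + p.2) + c * (p.1 + p.2)^2 with hF
  have hmem : ∀ c : ℝ, 0 < c → F c ∈ T := by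
    intro c hc
    refine ⟨?_, ?_, 0, 2 + 4 * c, by linarith, ?_⟩
    · have hs : ContDiff ℝ 1 (fun p : ℝ × ℝ => p.1 + p.2) := contDiff_fst.add contDiff_snd
      exact hs.add (contDiff_const.mul (hs.pow 2))
    · rintro ⟨a, b, e, hfun⟩
      have h0 := hfun (0, 0)
      have h1 := hfun (1, 0)
      have h2 := hfun (2, 0)
      simp only [hF] at h0 h1 h2
      norm_num at h0 h1 h2
      nlinarith
    · have hcomp : F c = (fun x => x + c * x^2) ∘ (fun p : ℝ × ℝ => p.1 + p.2) := rfl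
      rw [hcomp, Set.image_comp, hsum]
      apply Set.Subset.antisymm
      · rintro _ ⟨x, ⟨hx0, hx2⟩, rfl⟩
        constructor
        · have : 0 ≤ c * x^2 := by positivity
          simp only; nlinarith
        · simp only
          nlinarith [mul_nonneg hc.le (mul_nonneg (by linarith : (0:ℝ) ≤ 2 - x)
            (by linarith : (0:ℝ) ≤ 2 + x))]
      · have := intermediate_value_Icc (by norm_num : (0:ℝ) ≤ 2)
          (Continuous.continuousOn (by continuity : Continuous (fun x : ℝ => x + c * x^2)))
        have h02 : (0:ℝ) + c * 0^2 = 0 := by norm_num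
        have h22 : (2:ℝ) + c * 2^2 = 2 + 4 * c := by ring
        rw [h02, h22] at this
        exact this
  set val : (ℝ × ℝ → ℝ) → ℝ := fun f => f (1, 0) - 1 with hval
  have hsubset : Set.Ioi (0:ℝ) ⊆ val '' T := by
    intro c hc
    refine ⟨F c, hmem c hc, ?_⟩
    simp only [hval, hF]
    norm_num
  have hcnt : (Set.Ioi (0:ℝ)).Countable := (hcount.image val).mono hsubset
  have := hcnt.measure_zero MeasureTheory.volume
  rw [Real.volume_Ioi] at this
  exact absurd this (by simp)
end

section
/- Let 0 < λ < 1/2 and let K_λ be the attractor of the iterated function system {f_1(x) = λx, f_2(x) = λx + 1 - λ}, i.e. the unique nonempty compact set K_λ ⊂ ℝ with K_λ = λK_λ ∪ (λK_λ + 1 - λ). Let f : ℝ² → ℝ be continuously differentiable. If for every (x,y) ∈ [0,1]² the partial derivative ∂f/∂y is nonzero and ((1-2λ)/λ) · |∂f/∂y| ≤ |∂f/∂x| ≤ (1/(1-2λ)) · |∂f/∂y|, then f(K_λ, K_λ) = {f(x,y) : x, y ∈ K_λ} equals the closed interval [min of f on K_λ × K_λ, max of f on K_λ × K_λ]. -/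
/-!
Reflecting a coordinate by `x ↦ 1 - x` maps `K` to a set with the same self-similarity, so we may
assume both partial derivatives of `f` are positive on `[0,1]²`. Then on a square piece
`(a + δK) × (b + δK)` of `K × K`, `f` is smallest at the lower-left corner and largest at the
upper-right one, and both corners lie in `K × K`. The derivative bounds say precisely that `f`
does not decrease along `(λ, -(1 - 2λ))` and `(-(1 - 2λ), 1)`; hence, listing the four subpieces of
side `λδ` in a suitable order, the intervals between their corner values overlap consecutively, and
a value bracketed by the corners of a piece is bracketed by the corners of one of its subpieces.
Iterating gives points of `K × K` at distance `λⁿ` whose values bracket `c`, and since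
`f(K × K)` is compact, `c` is attained.
-/

open Set

section Along

variable {E : Type*} [NormedAddCommGroup E] [NormedSpace ℝ E]

def MonotoneOnAlong (f : E → ℝ) (s : Set E) (v : E) : Prop :=
  ∀ ⦃p⦄, p ∈ s → ∀ ⦃q⦄, q ∈ s → ∀ ⦃τ : ℝ⦄, 0 ≤ τ → q = p + τ • v → f p ≤ f q

theorem monotoneOnAlong_of_fderiv_nonneg {f : E → ℝ} (hf : Differentiable ℝ f) {s : Set E}
    (hs : Convex ℝ s) {v : E} (h : ∀ ξ ∈ s, 0 ≤ fderiv ℝ f ξ v) : MonotoneOnAlong f s v := by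
  rintro p hp q hq τ hτ rfl
  obtain ⟨z, hz, hmvt⟩ := domain_mvt (fun ξ _ => (hf ξ).hasFDerivAt.hasFDerivWithinAt) hs hp hq
  rw [add_sub_cancel_left, map_smul, smul_eq_mul] at hmvt
  nlinarith [h z (hs.segment_subset hp hq hz)]

theorem MonotoneOnAlong.comp {F : Type*} [NormedAddCommGroup F] [NormedSpace ℝ F]
    {f : F → ℝ} {s : Set E} {t : Set F} {v : E} {w : F} (hf : MonotoneOnAlong f t w)
    {A : E → F} (hA : MapsTo A s t) (hAv : ∀ p (τ : ℝ), A (p + τ • v) = A p + τ • w) :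
    MonotoneOnAlong (f ∘ A) s v := by
  rintro p hp q hq τ hτ rfl
  exact hf (hA hp) (hA hq) hτ (hAv p τ)

theorem MonotoneOnAlong.monotoneOn_prod {f : ℝ × ℝ → ℝ} {s t : Set ℝ}
    (h₁ : MonotoneOnAlong f (s ×ˢ t) (1, 0)) (h₂ : MonotoneOnAlong f (s ×ˢ t) (0, 1)) :
    MonotoneOn f (s ×ˢ t) := by
  rintro ⟨x₁, y₁⟩ ⟨hx₁, hy₁⟩ ⟨x₂, y₂⟩ ⟨hx₂, hy₂⟩ ⟨hx, hy⟩
  calc f (x₁, y₁) ≤ f (x₂, y₁) :=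
        h₁ (p := (x₁, y₁)) (q := (x₂, y₁)) ⟨hx₁, hy₁⟩ ⟨hx₂, hy₁⟩ (sub_nonneg.2 hx) (by ext <;> simp)
    _ ≤ f (x₂, y₂) := h₂ (p := (x₂, y₁)) ⟨hx₂, hy₁⟩ ⟨hx₂, hy₂⟩ (sub_nonneg.2 hy) (by ext <;> simp)

end Along

theorem IsPreconnected.exists_mul_eq_abs {α : Type*} [TopologicalSpace α] {s : Set α}
    (hs : IsPreconnected s) {g : α → ℝ} (hg : ContinuousOn g s) (h0 : ∀ x ∈ s, g x ≠ 0) :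
    ∃ ε : ℝ, (ε = 1 ∨ ε = -1) ∧ ∀ x ∈ s, ε * g x = |g x| := by
  rcases hs.eq_or_eq_neg_of_sq_eq hg.abs hg (fun x _ => by simp [sq_abs])
    (fun hx => h0 _ hx) with h | h
  · exact ⟨1, Or.inl rfl, fun x hx => by simp [h hx]⟩
  · exact ⟨-1, Or.inr rfl, fun x hx => by simp [h hx]⟩

theorem mem_image_of_forall_exists_dist_lt {X : Type*} [PseudoMetricSpace X] {s : Set X}
    (hs : IsCompact s) {f : X → ℝ} (hf : ContinuousOn f s) {c : ℝ}
    (h : ∀ ε > 0, ∃ p ∈ s, ∃ q ∈ s, dist p q < ε ∧ f p ≤ c ∧ c ≤ f q) : c ∈ f '' s := by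
  rw [← (hs.image_of_continuousOn hf).isClosed.closure_eq, Metric.mem_closure_iff]
  intro ε hε
  obtain ⟨δ, hδ, hfδ⟩ :=
    Metric.uniformContinuousOn_iff.1 (hs.uniformContinuousOn_of_continuous hf) ε hε
  obtain ⟨p, hp, q, hq, hpq, hpc, hcq⟩ := h δ hδ
  have hfpq := hfδ p hp q hq hpq
  rw [Real.dist_eq, abs_lt] at hfpq
  exact ⟨f p, mem_image_of_mem f hp, by rw [Real.dist_eq, abs_lt]; constructor <;> linarith⟩

theorem mem_Icc_or_mem_Icc_of_le {α : Type*} [LinearOrder α] {a₁ b₁ a₂ b₂ c : α}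
    (h : a₂ ≤ b₁) (hc : c ∈ Icc a₁ b₂) : c ∈ Icc a₁ b₁ ∨ c ∈ Icc a₂ b₂ := by
  rcases le_or_gt c b₁ with hcb | hbc
  · exact Or.inl ⟨hc.1, hcb⟩
  · exact Or.inr ⟨h.trans hbc.le, hc.2⟩

structure IsIFSInvariant (lam : ℝ) (K : Set ℝ) : Prop where
  isCompact : IsCompact K
  isLeast : IsLeast K 0
  isGreatest : IsGreatest K 1
  mapsTo_left : MapsTo (fun x => lam * x) K K
  mapsTo_right : MapsTo (fun x => lam * x + 1 - lam) K K

namespace IsIFSInvariant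

variable {lam : ℝ} {K : Set ℝ}

theorem of_eq_union (hlam₀ : 0 ≤ lam) (hlam₁ : lam < 1) (hne : K.Nonempty) (hc : IsCompact K)
    (hK : K = (fun x => lam * x) '' K ∪ (fun x => lam * x + 1 - lam) '' K) :
    IsIFSInvariant lam K := by
  have hleft : MapsTo (fun x => lam * x) K K := fun x hx => hK ▸ Or.inl (mem_image_of_mem _ hx)
  have hright : MapsTo (fun x => lam * x + 1 - lam) K K :=
    fun x hx => hK ▸ Or.inr (mem_image_of_mem _ hx)
  obtain ⟨m, hmK, hm⟩ := hc.exists_isLeast hne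
  obtain ⟨M, hMK, hM⟩ := hc.exists_isGreatest hne
  have hm0 : m = 0 := by
    have h₁ : m ≤ lam * m := hm (hleft hmK)
    have h₂ : lam * m ≤ m := by
      rw [hK] at hmK
      rcases hmK with ⟨k, hk, rfl⟩ | ⟨k, hk, rfl⟩ <;> nlinarith [hm hk]
    nlinarith
  have hM1 : M = 1 := by
    have h₁ : lam * M + 1 - lam ≤ M := hM (hright hMK)
    have h₂ : M ≤ lam * M + 1 - lam := by
      rw [hK] at hMK
      rcases hMK with ⟨k, hk, rfl⟩ | ⟨k, hk, rfl⟩ <;> nlinarith [hM hk]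
    nlinarith
  exact ⟨hc, hm0 ▸ ⟨hmK, hm⟩, hM1 ▸ ⟨hMK, hM⟩, hleft, hright⟩

theorem mem_Icc (hK : IsIFSInvariant lam K) {x : ℝ} (hx : x ∈ K) : x ∈ Icc 0 1 :=
  ⟨hK.isLeast.2 hx, hK.isGreatest.2 hx⟩

theorem image_one_sub (hK : IsIFSInvariant lam K) :
    IsIFSInvariant lam ((fun x => 1 - x) '' K) where
  isCompact := hK.isCompact.image (continuous_const.sub continuous_id)
  isLeast := ⟨⟨1, hK.isGreatest.1, sub_self 1⟩, by
    rintro _ ⟨x, hx, rfl⟩; linarith [(hK.mem_Icc hx).2]⟩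
  isGreatest := ⟨⟨0, hK.isLeast.1, sub_zero 1⟩, by
    rintro _ ⟨x, hx, rfl⟩; linarith [(hK.mem_Icc hx).1]⟩
  mapsTo_left := by
    rintro _ ⟨x, hx, rfl⟩; exact ⟨_, hK.mapsTo_right hx, by ring⟩
  mapsTo_right := by
    rintro _ ⟨x, hx, rfl⟩; exact ⟨_, hK.mapsTo_left hx, by ring⟩

theorem mapsTo_left_child (hK : IsIFSInvariant lam K) {a δ : ℝ}
    (h : MapsTo (fun t => a + δ * t) K K) : MapsTo (fun t => a + δ * lam * t) K K :=
  fun t ht => by simpa only [mul_assoc] using h (hK.mapsTo_left ht)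

theorem mapsTo_right_child (hK : IsIFSInvariant lam K) {a δ : ℝ}
    (h : MapsTo (fun t => a + δ * t) K K) :
    MapsTo (fun t => a + δ * (1 - lam) + δ * lam * t) K K :=
  fun t ht => by convert h (hK.mapsTo_right ht) using 1; ring

end IsIFSInvariant

/-- `MapsTo (fun t => a + δ * t) K K` encodes `a + δ • K ⊆ K`; the two corners lie in
`K₁ ×ˢ K₂` because `0, 1 ∈ Kᵢ`. -/
def HasBracketingSquare (K₁ K₂ : Set ℝ) (f : ℝ × ℝ → ℝ) (c δ : ℝ) : Prop :=
  ∃ a b : ℝ, MapsTo (fun t => a + δ * t) K₁ K₁ ∧ MapsTo (fun t => b + δ * t) K₂ K₂ ∧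
    c ∈ Icc (f (a, b)) (f (a + δ, b + δ))

section Bracketing

variable {lam : ℝ} {K₁ K₂ : Set ℝ} {f : ℝ × ℝ → ℝ} {c : ℝ}

theorem HasBracketingSquare.mul_lam (hK₁ : IsIFSInvariant lam K₁)
    (hK₂ : IsIFSInvariant lam K₂)
    (h₁ : MonotoneOnAlong f (Icc 0 1 ×ˢ Icc 0 1) (lam, -(1 - 2 * lam)))
    (h₂ : MonotoneOnAlong f (Icc 0 1 ×ˢ Icc 0 1) (-(1 - 2 * lam), 1))
    {δ : ℝ} (hδ : 0 ≤ δ) (h : HasBracketingSquare K₁ K₂ f c δ) :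
    HasBracketingSquare K₁ K₂ f c (δ * lam) := by
  obtain ⟨a, b, ha, hb, hc⟩ := h
  have hmem : ∀ s ∈ K₁, ∀ t ∈ K₂, ∀ x y, x = a + δ * s → y = b + δ * t →
      (x, y) ∈ Icc 0 1 ×ˢ Icc 0 1 := by
    rintro s hs t ht _ _ rfl rfl
    exact ⟨hK₁.mem_Icc (ha hs), hK₂.mem_Icc (hb ht)⟩
  have hzero {K} (hK : IsIFSInvariant lam K) : 0 ∈ K := hK.isLeast.1
  have hone_sub {K} (hK : IsIFSInvariant lam K) : lam * 0 + 1 - lam ∈ K :=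
    hK.mapsTo_right (hzero hK)
  have hlam_mem {K} (hK : IsIFSInvariant lam K) : lam * 1 ∈ K := hK.mapsTo_left hK.isGreatest.1
  set x₁ := a + δ * (1 - lam)
  set y₁ := b + δ * (1 - lam)
  set ℓ := δ * lam
  -- In the order (0,0), (0,1), (1,0), (1,1) of the children, the lower-left corner of each lies
  -- below the upper-right corner of its predecessor.
  have e₁ : f (a, y₁) ≤ f (a + ℓ, b + ℓ) :=
    h₁ (hmem _ (hzero hK₁) _ (hone_sub hK₂) _ _ (by ring) (by ring))
      (hmem _ (hlam_mem hK₁) _ (hlam_mem hK₂) _ _ (by ring) (by ring)) hδ (by ext <;> simp <;> ring)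
  have e₂ : f (x₁, b) ≤ f (a + ℓ, y₁ + ℓ) :=
    h₂ (hmem _ (hone_sub hK₁) _ (hzero hK₂) _ _ (by ring) (by ring))
      (hmem _ (hlam_mem hK₁) _ hK₂.isGreatest.1 _ _ (by ring) (by ring)) hδ (by ext <;> simp <;> ring)
  have e₃ : f (x₁, y₁) ≤ f (x₁ + ℓ, b + ℓ) :=
    h₁ (hmem _ (hone_sub hK₁) _ (hone_sub hK₂) _ _ (by ring) (by ring))
      (hmem _ hK₁.isGreatest.1 _ (hlam_mem hK₂) _ _ (by ring) (by ring)) hδ (by ext <;> simp <;> ring)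
  rw [show a + δ = x₁ + ℓ by ring, show b + δ = y₁ + ℓ by ring] at hc
  rcases mem_Icc_or_mem_Icc_of_le e₂ hc with hc | hc
  · rcases mem_Icc_or_mem_Icc_of_le e₁ hc with hc | hc
    · exact ⟨a, b, hK₁.mapsTo_left_child ha, hK₂.mapsTo_left_child hb, hc⟩
    · exact ⟨a, y₁, hK₁.mapsTo_left_child ha, hK₂.mapsTo_right_child hb, hc⟩
  · rcases mem_Icc_or_mem_Icc_of_le e₃ hc with hc | hc
    · exact ⟨x₁, b, hK₁.mapsTo_right_child ha, hK₂.mapsTo_left_child hb, hc⟩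
    · exact ⟨x₁, y₁, hK₁.mapsTo_right_child ha, hK₂.mapsTo_right_child hb, hc⟩

theorem hasBracketingSquare_pow (hlam : 0 ≤ lam) (hK₁ : IsIFSInvariant lam K₁)
    (hK₂ : IsIFSInvariant lam K₂)
    (h₁ : MonotoneOnAlong f (Icc 0 1 ×ˢ Icc 0 1) (lam, -(1 - 2 * lam)))
    (h₂ : MonotoneOnAlong f (Icc 0 1 ×ˢ Icc 0 1) (-(1 - 2 * lam), 1))
    (hc : c ∈ Icc (f (0, 0)) (f (1, 1))) (n : ℕ) : HasBracketingSquare K₁ K₂ f c (lam ^ n) := by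
  induction n with
  | zero => exact ⟨0, 0, fun _ ht => by simpa, fun _ ht => by simpa, by simpa⟩
  | succ n ih => exact pow_succ lam n ▸ ih.mul_lam hK₁ hK₂ h₁ h₂ (pow_nonneg hlam n)

theorem Icc_subset_image_prod (hlam₀ : 0 ≤ lam) (hlam₁ : lam < 1)
    (hK₁ : IsIFSInvariant lam K₁) (hK₂ : IsIFSInvariant lam K₂) (hf : ContinuousOn f (K₁ ×ˢ K₂))
    (h₁ : MonotoneOnAlong f (Icc 0 1 ×ˢ Icc 0 1) (lam, -(1 - 2 * lam)))
    (h₂ : MonotoneOnAlong f (Icc 0 1 ×ˢ Icc 0 1) (-(1 - 2 * lam), 1)) :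
    Icc (f (0, 0)) (f (1, 1)) ⊆ f '' (K₁ ×ˢ K₂) := by
  intro c hc
  refine mem_image_of_forall_exists_dist_lt (hK₁.isCompact.prod hK₂.isCompact) hf fun ε hε => ?_
  obtain ⟨n, hn⟩ := exists_pow_lt_of_lt_one hε hlam₁
  obtain ⟨a, b, ha, hb, hab⟩ := hasBracketingSquare_pow hlam₀ hK₁ hK₂ h₁ h₂ hc n
  refine ⟨(a, b), ⟨by simpa using ha hK₁.isLeast.1, by simpa using hb hK₂.isLeast.1⟩,
    (a + lam ^ n, b + lam ^ n),
    ⟨by simpa using ha hK₁.isGreatest.1, by simpa using hb hK₂.isGreatest.1⟩, ?_, hab⟩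
  simpa [Prod.dist_eq, Real.dist_eq, abs_of_nonneg hlam₀] using hn

theorem ordConnected_image_prod (hlam₀ : 0 ≤ lam) (hlam₁ : lam < 1)
    (hK₁ : IsIFSInvariant lam K₁) (hK₂ : IsIFSInvariant lam K₂) (hf : ContinuousOn f (K₁ ×ˢ K₂))
    (hx : MonotoneOnAlong f (Icc 0 1 ×ˢ Icc 0 1) (1, 0))
    (hy : MonotoneOnAlong f (Icc 0 1 ×ˢ Icc 0 1) (0, 1))
    (h₁ : MonotoneOnAlong f (Icc 0 1 ×ˢ Icc 0 1) (lam, -(1 - 2 * lam)))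
    (h₂ : MonotoneOnAlong f (Icc 0 1 ×ˢ Icc 0 1) (-(1 - 2 * lam), 1)) :
    (f '' (K₁ ×ˢ K₂)).OrdConnected := by
  have hmono := hx.monotoneOn_prod hy
  have hQ {p} (hp : p ∈ K₁ ×ˢ K₂) : p ∈ Icc 0 1 ×ˢ Icc 0 1 :=
    ⟨hK₁.mem_Icc hp.1, hK₂.mem_Icc hp.2⟩
  have h00 : ((0, 0) : ℝ × ℝ) ∈ Icc 0 1 ×ˢ Icc 0 1 := hQ ⟨hK₁.isLeast.1, hK₂.isLeast.1⟩
  have h11 : ((1, 1) : ℝ × ℝ) ∈ Icc 0 1 ×ˢ Icc 0 1 := hQ ⟨hK₁.isGreatest.1, hK₂.isGreatest.1⟩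
  refine ⟨?_⟩
  rintro _ ⟨p, hp, rfl⟩ _ ⟨q, hq, rfl⟩ c hc
  refine Icc_subset_image_prod hlam₀ hlam₁ hK₁ hK₂ hf h₁ h₂ ⟨?_, ?_⟩
  · exact (hmono h00 (hQ hp) ⟨(hQ hp).1.1, (hQ hp).2.1⟩).trans hc.1
  · exact hc.2.trans (hmono (hQ hq) h11 ⟨(hQ hq).1.2, (hQ hq).2.2⟩)

end Bracketing

/-- For `ε = ±1` this is `id` or `x ↦ 1 - x`, written as one affine map with linear part `ε`. -/
noncomputable def unitReflect (ε x : ℝ) : ℝ := (1 - ε) / 2 + ε * x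

section Reflect

variable {ε : ℝ}

theorem continuous_unitReflect (ε : ℝ) : Continuous (unitReflect ε) :=
  continuous_const.add (continuous_const.mul continuous_id)

theorem unitReflect_eq_id_or (hε : ε = 1 ∨ ε = -1) :
    unitReflect ε = id ∨ unitReflect ε = fun x => 1 - x := by
  rcases hε with rfl | rfl
  · exact Or.inl (funext fun x => by simp [unitReflect])
  · exact Or.inr (funext fun x => by norm_num [unitReflect]; ring)

theorem unitReflect_involutive (hε : ε = 1 ∨ ε = -1) : Function.Involutive (unitReflect ε) := by
  rcases unitReflect_eq_id_or hε with h | h <;> rw [h]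
  · exact fun _ => rfl
  · exact sub_sub_cancel 1

theorem mapsTo_unitReflect (hε : ε = 1 ∨ ε = -1) : MapsTo (unitReflect ε) (Icc 0 1) (Icc 0 1) := by
  rcases unitReflect_eq_id_or hε with h | h <;> rw [h]
  · exact mapsTo_id _
  · exact fun x hx => ⟨by linarith [hx.2], by linarith [hx.1]⟩

theorem IsIFSInvariant.image_unitReflect {lam : ℝ} {K : Set ℝ} (hK : IsIFSInvariant lam K)
    (hε : ε = 1 ∨ ε = -1) : IsIFSInvariant lam (unitReflect ε '' K) := by
  rcases unitReflect_eq_id_or hε with h | h <;> rw [h]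
  · rwa [image_id]
  · exact hK.image_one_sub

end Reflect

theorem fderiv_apply_prod {f : ℝ × ℝ → ℝ} (ξ : ℝ × ℝ) (u w : ℝ) :
    fderiv ℝ f ξ (u, w) = u * fderiv ℝ f ξ (1, 0) + w * fderiv ℝ f ξ (0, 1) := by
  rw [show ((u, w) : ℝ × ℝ) = u • (1, 0) + w • (0, 1) by ext <;> simp, map_add, map_smul,
    map_smul, smul_eq_mul, smul_eq_mul]

theorem monotoneOnAlong_comp_unitReflect {f : ℝ × ℝ → ℝ} (hf : Differentiable ℝ f)
    {ε₁ ε₂ : ℝ} (hε₁ : ε₁ = 1 ∨ ε₁ = -1) (hε₂ : ε₂ = 1 ∨ ε₂ = -1)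
    (hfx : ∀ ξ ∈ Icc 0 1 ×ˢ Icc 0 1, ε₁ * fderiv ℝ f ξ (1, 0) = |fderiv ℝ f ξ (1, 0)|)
    (hfy : ∀ ξ ∈ Icc 0 1 ×ˢ Icc 0 1, ε₂ * fderiv ℝ f ξ (0, 1) = |fderiv ℝ f ξ (0, 1)|)
    {u w : ℝ}
    (huw : ∀ ξ ∈ Icc 0 1 ×ˢ Icc 0 1, 0 ≤ u * |fderiv ℝ f ξ (1, 0)| + w * |fderiv ℝ f ξ (0, 1)|) :
    MonotoneOnAlong (f ∘ Prod.map (unitReflect ε₁) (unitReflect ε₂)) (Icc 0 1 ×ˢ Icc 0 1)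
      (u, w) := by
  refine MonotoneOnAlong.comp (w := (ε₁ * u, ε₂ * w)) ?_
    ((mapsTo_unitReflect hε₁).prodMap (mapsTo_unitReflect hε₂))
    fun p τ => by ext <;> simp [unitReflect] <;> ring
  refine monotoneOnAlong_of_fderiv_nonneg hf ((convex_Icc 0 1).prod (convex_Icc 0 1))
    fun ξ hξ => ?_
  have := huw ξ hξ
  rw [← hfx ξ hξ, ← hfy ξ hξ] at this
  rw [fderiv_apply_prod]
  linarith

theorem ordConnected_image_prod_of_abs_fderiv {lam : ℝ} (hlam₀ : 0 ≤ lam) (hlam₁ : lam < 1)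
    {K : Set ℝ} (hK : IsIFSInvariant lam K) {f : ℝ × ℝ → ℝ} (hf : Differentiable ℝ f)
    {ε₁ ε₂ : ℝ} (hε₁ : ε₁ = 1 ∨ ε₁ = -1) (hε₂ : ε₂ = 1 ∨ ε₂ = -1)
    (hfx : ∀ ξ ∈ Icc 0 1 ×ˢ Icc 0 1, ε₁ * fderiv ℝ f ξ (1, 0) = |fderiv ℝ f ξ (1, 0)|)
    (hfy : ∀ ξ ∈ Icc 0 1 ×ˢ Icc 0 1, ε₂ * fderiv ℝ f ξ (0, 1) = |fderiv ℝ f ξ (0, 1)|)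
    (h₁ : ∀ ξ ∈ Icc 0 1 ×ˢ Icc 0 1,
      (1 - 2 * lam) * |fderiv ℝ f ξ (0, 1)| ≤ lam * |fderiv ℝ f ξ (1, 0)|)
    (h₂ : ∀ ξ ∈ Icc 0 1 ×ˢ Icc 0 1,
      (1 - 2 * lam) * |fderiv ℝ f ξ (1, 0)| ≤ |fderiv ℝ f ξ (0, 1)|) :
    (f '' K ×ˢ K).OrdConnected := by
  set R := Prod.map (unitReflect ε₁) (unitReflect ε₂)
  have himage : f '' K ×ˢ K = (f ∘ R) '' ((unitReflect ε₁ '' K) ×ˢ (unitReflect ε₂ '' K)) := by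
    rw [prod_image_image_eq, image_image]
    exact image_congr fun p _ => congrArg f
      ((unitReflect_involutive hε₁).prodMap (unitReflect_involutive hε₂) p).symm
  have hR {u w : ℝ} := monotoneOnAlong_comp_unitReflect hf hε₁ hε₂ hfx hfy (u := u) (w := w)
  rw [himage]
  refine ordConnected_image_prod hlam₀ hlam₁ (hK.image_unitReflect hε₁)
    (hK.image_unitReflect hε₂) (hf.continuous.comp
      ((continuous_unitReflect ε₁).prodMap (continuous_unitReflect ε₂))).continuousOn
    (hR ?_) (hR ?_) (hR ?_) (hR ?_)
  all_goals intro ξ hξ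
  · simp
  · simp
  · linarith [h₁ ξ hξ]
  · linarith [h₂ ξ hξ]

/-- Nonlinear thickness theorem for the homogeneous self-similar set `K_λ`, the attractor of
the IFS `{x ↦ λx, x ↦ λx + 1 - λ}` with `0 < λ < 1/2`: if `f : ℝ² → ℝ` is `C¹` and on `[0,1]²`
one has `∂_y f ≠ 0` and `(1-2λ)/λ · |∂_y f| ≤ |∂_x f| ≤ 1/(1-2λ) · |∂_y f|`, then
`f(K_λ, K_λ)` is the closed interval from its minimum to its maximum. -/
theorem nonlinear_newhouse_selfsimilar (lam : ℝ) (hlam₀ : 0 < lam) (hlam₁ : lam < 1 / 2)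
    (K : Set ℝ) (hKne : K.Nonempty) (hKc : IsCompact K)
    (hKattr : K = (fun x => lam * x) '' K ∪ (fun x => lam * x + 1 - lam) '' K)
    (f : ℝ × ℝ → ℝ) (hf : ContDiff ℝ 1 f)
    (hder : ∀ p ∈ Set.Icc (0 : ℝ) 1 ×ˢ Set.Icc (0 : ℝ) 1,
      fderiv ℝ f p (0, 1) ≠ 0 ∧
      (1 - 2 * lam) / lam * |fderiv ℝ f p (0, 1)| ≤ |fderiv ℝ f p (1, 0)| ∧
      |fderiv ℝ f p (1, 0)| ≤ 1 / (1 - 2 * lam) * |fderiv ℝ f p (0, 1)|) :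
    f '' K ×ˢ K = Set.Icc (sInf (f '' K ×ˢ K)) (sSup (f '' K ×ˢ K)) := by
  have hK := IsIFSInvariant.of_eq_union hlam₀.le (by linarith) hKne hKc hKattr
  have hQ : IsPreconnected (Icc (0 : ℝ) 1 ×ˢ Icc (0 : ℝ) 1) :=
    isPreconnected_Icc.prod isPreconnected_Icc
  have hpartial (v : ℝ × ℝ) : ContinuousOn (fun ξ => fderiv ℝ f ξ v) (Icc 0 1 ×ˢ Icc 0 1) :=
    ((hf.continuous_fderiv one_ne_zero).clm_apply continuous_const).continuousOn
  have h₁ : ∀ ξ ∈ Icc 0 1 ×ˢ Icc 0 1,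
      (1 - 2 * lam) * |fderiv ℝ f ξ (0, 1)| ≤ lam * |fderiv ℝ f ξ (1, 0)| := fun ξ hξ => by
    have := (hder ξ hξ).2.1
    rw [div_mul_eq_mul_div, div_le_iff₀ hlam₀] at this
    linarith
  have h₂ : ∀ ξ ∈ Icc 0 1 ×ˢ Icc 0 1,
      (1 - 2 * lam) * |fderiv ℝ f ξ (1, 0)| ≤ |fderiv ℝ f ξ (0, 1)| := fun ξ hξ => by
    have := (hder ξ hξ).2.2
    rw [one_div_mul_eq_div, le_div_iff₀ (by linarith)] at this
    linarith
  obtain ⟨ε₂, hε₂, hfy⟩ := hQ.exists_mul_eq_abs (hpartial (0, 1)) fun ξ hξ => (hder ξ hξ).1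
  obtain ⟨ε₁, hε₁, hfx⟩ := hQ.exists_mul_eq_abs (hpartial (1, 0)) fun ξ hξ => by
    have := mul_pos (by linarith : 0 < 1 - 2 * lam) (abs_pos.2 (hder ξ hξ).1)
    exact abs_pos.1 (pos_of_mul_pos_right (this.trans_le (h₁ ξ hξ)) hlam₀.le)
  have hord := ordConnected_image_prod_of_abs_fderiv hlam₀.le (by linarith) hK
    (hf.differentiable one_ne_zero) hε₁ hε₂ hfx hfy h₁ h₂
  exact eq_Icc_of_connected_compact ⟨(hKne.prod hKne).image f, hord.isPreconnected⟩
    ((hKc.prod hKc).image hf.continuous)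
end

section
/- Let 0 < λ_2 ≤ λ_1 < 1 with λ_1 + λ_2 < 1 and λ_1 ≥ (1-λ_2)², and let K be the unique nonempty compact set with K = λ_1 K ∪ (λ_2 K + 1 - λ_2). Then f_2(K) · f_2(K) = {xy : x, y ∈ f_2(K)} = [(1-λ_2)², 1], where f_2(K) = λ_2 K + 1 - λ_2. -/
open scoped Classical in
noncomputable def mulStep (l₁ l₂ z : ℝ) (s : ℝ × ℝ × ℝ × ℝ) : ℝ × ℝ × ℝ × ℝ :=
  if s.2.2.2 ≤ s.2.1 then
    if z ≤ (s.1 + l₁ * s.2.1) * (s.2.2.1 + s.2.2.2) then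
      (s.1, l₁ * s.2.1, s.2.2.1, s.2.2.2)
    else
      (s.1 + (1 - l₂) * s.2.1, l₂ * s.2.1, s.2.2.1, s.2.2.2)
  else
    if z ≤ (s.1 + s.2.1) * (s.2.2.1 + l₁ * s.2.2.2) then
      (s.1, s.2.1, s.2.2.1, l₁ * s.2.2.2)
    else
      (s.1, s.2.1, s.2.2.1 + (1 - l₂) * s.2.2.2, l₂ * s.2.2.2)

structure MulGood (l₁ l₂ z : ℝ) (K A : Set ℝ) (s : ℝ × ℝ × ℝ × ℝ) : Prop where
  hp1 : 1 - l₂ ≤ s.1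
  hp2 : s.1 + s.2.1 ≤ 1
  hq1 : 1 - l₂ ≤ s.2.2.1
  hq2 : s.2.2.1 + s.2.2.2 ≤ 1
  hd : 0 < s.2.1
  he : 0 < s.2.2.2
  hde : l₂ * s.2.1 ≤ s.2.2.2
  hed : l₂ * s.2.2.2 ≤ s.2.1
  hlow : s.1 * s.2.2.1 ≤ z
  hhigh : z ≤ (s.1 + s.2.1) * (s.2.2.1 + s.2.2.2)
  hmem1 : ∀ x ∈ K, s.2.1 * x + s.1 ∈ A
  hmem2 : ∀ x ∈ K, s.2.2.2 * x + s.2.2.1 ∈ A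

set_option maxHeartbeats 1000000 in
theorem mulStep_good (l₁ l₂ z : ℝ) (K A : Set ℝ)
    (h₂pos : 0 < l₂) (h₂₁ : l₂ ≤ l₁) (h₁lt : l₁ < 1) (hsum : l₁ + l₂ < 1)
    (hl : (1 - l₂) ^ 2 ≤ l₁)
    (hsub1 : ∀ x ∈ K, l₁ * x ∈ K) (hsub2 : ∀ x ∈ K, l₂ * x + 1 - l₂ ∈ K)
    (s : ℝ × ℝ × ℝ × ℝ) (h : MulGood l₁ l₂ z K A s) :
    MulGood l₁ l₂ z K A (mulStep l₁ l₂ z s) ∧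
    s.1 ≤ (mulStep l₁ l₂ z s).1 ∧
    (mulStep l₁ l₂ z s).1 + (mulStep l₁ l₂ z s).2.1 ≤ s.1 + s.2.1 ∧
    s.2.2.1 ≤ (mulStep l₁ l₂ z s).2.2.1 ∧
    (mulStep l₁ l₂ z s).2.2.1 + (mulStep l₁ l₂ z s).2.2.2 ≤ s.2.2.1 + s.2.2.2 ∧
    (mulStep l₁ l₂ z s).2.1 * (mulStep l₁ l₂ z s).2.2.2 ≤ l₁ * (s.2.1 * s.2.2.2) := by
  have h₁pos : 0 < l₁ := lt_of_lt_of_le h₂pos h₂₁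
  obtain ⟨p, d, q, e⟩ := s
  obtain ⟨hp1, hp2, hq1, hq2, hd, he, hde, hed, hlow, hhigh, hmem1, hmem2⟩ := h
  dsimp only at hp1 hp2 hq1 hq2 hd he hde hed hlow hhigh hmem1 hmem2 ⊢
  unfold mulStep
  dsimp only
  have hde0 : 0 ≤ d * e := mul_nonneg hd.le he.le
  have hl1de : 0 ≤ (l₁ - l₂) * (d * e) := mul_nonneg (by linarith) hde0
  split_ifs with hcase hz1 hz1
  · -- refine left, child 1
    refine ⟨⟨?_, ?_, ?_, ?_, ?_, ?_, ?_, ?_, ?_, ?_, ?_, ?_⟩, ?_, ?_, ?_, ?_, ?_⟩ <;> dsimp only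
    · exact hp1
    · nlinarith
    · exact hq1
    · exact hq2
    · exact mul_pos h₁pos hd
    · exact he
    · -- l₂ * (l₁ * d) ≤ e
      nlinarith [mul_nonneg h₂pos.le hd.le]
    · -- l₂ * e ≤ l₁ * d
      have h1 : l₂ * e ≤ l₂ * d := mul_le_mul_of_nonneg_left hcase h₂pos.le
      have h2 : l₂ * d ≤ l₁ * d := mul_le_mul_of_nonneg_right h₂₁ hd.le
      linarith
    · exact hlow
    · exact hz1
    · intro x hx
      have h' := hmem1 (l₁ * x) (hsub1 x hx)
      have he' : l₁ * d * x + p = d * (l₁ * x) + p := by ring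
      rw [he']; exact h'
    · exact hmem2
    · exact le_refl p
    · nlinarith
    · exact le_refl q
    · exact le_refl _
    · -- l₁ * d * e ≤ l₁ * (d * e)
      nlinarith
  · -- refine left, child 2
    have hq_le1 : q ≤ 1 := by linarith
    have t1 : (0:ℝ) ≤ (p - (1 - l₂)) * e := mul_nonneg (by linarith) he.le
    have t2 : (0:ℝ) ≤ (e - l₂ * d) * (1 - l₂) := mul_nonneg (by linarith) (by linarith)
    have t3 : (0:ℝ) ≤ ((1 - l₂ - l₁) * d) * (1 - q) :=
      mul_nonneg (mul_nonneg (by linarith) hd.le) (by linarith)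
    have t4 : (0:ℝ) ≤ (l₁ * d) * e := mul_nonneg (mul_nonneg h₁pos.le hd.le) he.le
    have t5 : (0:ℝ) ≤ (l₁ - (1 - l₂) ^ 2) * d := mul_nonneg (by linarith) hd.le
    have hcov : (p + (1 - l₂) * d) * q ≤ (p + l₁ * d) * (q + e) := by nlinarith [t1, t2, t3, t4, t5]
    have hzlow : (p + (1 - l₂) * d) * q ≤ z := le_of_lt (lt_of_le_of_lt hcov (not_le.mp hz1))
    have hd1 : 0 ≤ (1 - l₂) * d := mul_nonneg (by linarith) hd.le
    refine ⟨⟨?_, ?_, ?_, ?_, ?_, ?_, ?_, ?_, ?_, ?_, ?_, ?_⟩, ?_, ?_, ?_, ?_, ?_⟩ <;> dsimp only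
    · linarith
    · nlinarith
    · exact hq1
    · exact hq2
    · exact mul_pos h₂pos hd
    · exact he
    · -- l₂ * (l₂ * d) ≤ e
      nlinarith [mul_nonneg h₂pos.le hd.le]
    · -- l₂ * e ≤ l₂ * d
      exact mul_le_mul_of_nonneg_left hcase h₂pos.le
    · exact hzlow
    · -- z ≤ (p + (1-l₂)d + l₂ d)(q + e)
      nlinarith [hhigh]
    · intro x hx
      have h' := hmem1 (l₂ * x + 1 - l₂) (hsub2 x hx)
      have he' : l₂ * d * x + (p + (1 - l₂) * d) = d * (l₂ * x + 1 - l₂) + p := by ring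
      rw [he']; exact h'
    · exact hmem2
    · linarith
    · nlinarith
    · exact le_refl q
    · exact le_refl _
    · nlinarith
  · -- refine right, child 1
    refine ⟨⟨?_, ?_, ?_, ?_, ?_, ?_, ?_, ?_, ?_, ?_, ?_, ?_⟩, ?_, ?_, ?_, ?_, ?_⟩ <;> dsimp only
    · exact hp1
    · exact hp2
    · exact hq1
    · nlinarith
    · exact hd
    · exact mul_pos h₁pos he
    · -- l₂ * d ≤ l₁ * e
      have h1 : l₂ * d ≤ l₂ * e := mul_le_mul_of_nonneg_left (le_of_lt (not_le.mp hcase)) h₂pos.le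
      have h2 : l₂ * e ≤ l₁ * e := mul_le_mul_of_nonneg_right h₂₁ he.le
      linarith
    · -- l₂ * (l₁ * e) ≤ d
      nlinarith [mul_nonneg h₂pos.le he.le]
    · exact hlow
    · exact hz1
    · exact hmem1
    · intro x hx
      have h' := hmem2 (l₁ * x) (hsub1 x hx)
      have he' : l₁ * e * x + q = e * (l₁ * x) + q := by ring
      rw [he']; exact h'
    · exact le_refl p
    · exact le_refl _
    · exact le_refl q
    · nlinarith
    · nlinarith
  · -- refine right, child 2
    have hp_le1 : p ≤ 1 := by linarith
    have t1 : (0:ℝ) ≤ (q - (1 - l₂)) * d := mul_nonneg (by linarith) hd.le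
    have t2 : (0:ℝ) ≤ (d - l₂ * e) * (1 - l₂) := mul_nonneg (by linarith) (by linarith)
    have t3 : (0:ℝ) ≤ ((1 - l₂ - l₁) * e) * (1 - p) :=
      mul_nonneg (mul_nonneg (by linarith) he.le) (by linarith)
    have t4 : (0:ℝ) ≤ (l₁ * e) * d := mul_nonneg (mul_nonneg h₁pos.le he.le) hd.le
    have t5 : (0:ℝ) ≤ (l₁ - (1 - l₂) ^ 2) * e := mul_nonneg (by linarith) he.le
    have hcov : p * (q + (1 - l₂) * e) ≤ (p + d) * (q + l₁ * e) := by nlinarith [t1, t2, t3, t4, t5]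
    have hzlow : p * (q + (1 - l₂) * e) ≤ z := le_of_lt (lt_of_le_of_lt hcov (not_le.mp hz1))
    have he1 : 0 ≤ (1 - l₂) * e := mul_nonneg (by linarith) he.le
    refine ⟨⟨?_, ?_, ?_, ?_, ?_, ?_, ?_, ?_, ?_, ?_, ?_, ?_⟩, ?_, ?_, ?_, ?_, ?_⟩ <;> dsimp only
    · exact hp1
    · exact hp2
    · linarith
    · nlinarith
    · exact hd
    · exact mul_pos h₂pos he
    · -- l₂ * d ≤ l₂ * e
      exact mul_le_mul_of_nonneg_left (le_of_lt (not_le.mp hcase)) h₂pos.le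
    · -- l₂ * (l₂ * e) ≤ d
      nlinarith [mul_nonneg h₂pos.le he.le]
    · exact hzlow
    · nlinarith [hhigh]
    · exact hmem1
    · intro x hx
      have h' := hmem2 (l₂ * x + 1 - l₂) (hsub2 x hx)
      have he' : l₂ * e * x + (q + (1 - l₂) * e) = e * (l₂ * x + 1 - l₂) + q := by ring
      rw [he']; exact h'
    · exact le_refl p
    · exact le_refl _
    · linarith
    · nlinarith
    · nlinarith

noncomputable def mulSeq (l₁ l₂ z : ℝ) (n : ℕ) : ℝ × ℝ × ℝ × ℝ :=
  (mulStep l₁ l₂ z)^[n] (1 - l₂, l₂, 1 - l₂, l₂)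

theorem mulSeq_succ (l₁ l₂ z : ℝ) (n : ℕ) :
    mulSeq l₁ l₂ z (n + 1) = mulStep l₁ l₂ z (mulSeq l₁ l₂ z n) :=
  Function.iterate_succ_apply' _ _ _

set_option maxHeartbeats 1000000 in
/-- For the attractor `K` of the IFS `{x ↦ λ₁x, x ↦ λ₂x + 1 - λ₂}` with `0 < λ₂ ≤ λ₁ < 1`,
`λ₁ + λ₂ < 1` and `λ₁ ≥ (1 - λ₂)²`, one has `f₂(K) · f₂(K) = [(1 - λ₂)², 1]`, where
`f₂(K) = λ₂K + 1 - λ₂`. -/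
theorem mul_right_copy (l₁ l₂ : ℝ)
    (h₂pos : 0 < l₂) (h₂₁ : l₂ ≤ l₁) (h₁lt : l₁ < 1) (hsum : l₁ + l₂ < 1)
    (hl : (1 - l₂) ^ 2 ≤ l₁)
    (K : Set ℝ) (hKne : K.Nonempty) (hKc : IsCompact K)
    (hKattr : K = (fun x => l₁ * x) '' K ∪ (fun x => l₂ * x + 1 - l₂) '' K) :
    {z : ℝ | ∃ x ∈ (fun x => l₂ * x + 1 - l₂) '' K, ∃ y ∈ (fun x => l₂ * x + 1 - l₂) '' K,
        z = x * y} = Set.Icc ((1 - l₂) ^ 2) 1 := by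
  have h₁pos : 0 < l₁ := lt_of_lt_of_le h₂pos h₂₁
  have hsub1 : ∀ x ∈ K, l₁ * x ∈ K := by
    intro x hx
    exact hKattr.ge (Set.mem_union_left _ ⟨x, hx, rfl⟩)
  have hsub2 : ∀ x ∈ K, l₂ * x + 1 - l₂ ∈ K := by
    intro x hx
    exact hKattr.ge (Set.mem_union_right _ ⟨x, hx, rfl⟩)
  have hbddA : BddAbove K := hKc.bddAbove
  have hbddB : BddBelow K := hKc.bddBelow
  have hsupmem : sSup K ∈ K := hKc.sSup_mem hKne
  have hinfmem : sInf K ∈ K := hKc.sInf_mem hKne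
  have hsup_ge : 1 ≤ sSup K := by
    have h2 := le_csSup hbddA (hsub2 _ hsupmem)
    nlinarith
  have hsup_le : sSup K ≤ 1 := by
    rcases hKattr.le hsupmem with ⟨k, hk, hke⟩ | ⟨k, hk, hke⟩
    · exfalso
      have hkle : k ≤ sSup K := le_csSup hbddA hk
      simp only at hke
      nlinarith
    · have hkle : k ≤ sSup K := le_csSup hbddA hk
      simp only at hke
      nlinarith
  have hinf_le : sInf K ≤ 0 := by
    have h2 := csInf_le hbddB (hsub1 _ hinfmem)
    nlinarith
  have hinf_ge : 0 ≤ sInf K := by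
    rcases hKattr.le hinfmem with ⟨k, hk, hke⟩ | ⟨k, hk, hke⟩
    · have hkge : sInf K ≤ k := csInf_le hbddB hk
      simp only at hke
      nlinarith
    · exfalso
      have hkge : sInf K ≤ k := csInf_le hbddB hk
      simp only at hke
      nlinarith
  have hK01 : ∀ x ∈ K, 0 ≤ x ∧ x ≤ 1 := fun x hx =>
    ⟨le_trans hinf_ge (csInf_le hbddB hx), le_trans (le_csSup hbddA hx) hsup_le⟩
  have hAc : IsCompact ((fun x => l₂ * x + 1 - l₂) '' K) :=
    hKc.image (((continuous_const.mul continuous_id).add continuous_const).sub continuous_const)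
  ext z
  simp only [Set.mem_setOf_eq, Set.mem_Icc]
  constructor
  · rintro ⟨x, ⟨u, hu, rfl⟩, y, ⟨v, hv, rfl⟩, rfl⟩
    obtain ⟨hu0, hu1⟩ := hK01 u hu
    obtain ⟨hv0, hv1⟩ := hK01 v hv
    simp only
    have hx1 : 1 - l₂ ≤ l₂ * u + 1 - l₂ := by nlinarith
    have hx2 : l₂ * u + 1 - l₂ ≤ 1 := by nlinarith
    have hy1 : 1 - l₂ ≤ l₂ * v + 1 - l₂ := by nlinarith
    have hy2 : l₂ * v + 1 - l₂ ≤ 1 := by nlinarith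
    have hl2 : (0:ℝ) ≤ 1 - l₂ := by linarith
    constructor
    · calc (1 - l₂) ^ 2 = (1 - l₂) * (1 - l₂) := by ring
        _ ≤ (l₂ * u + 1 - l₂) * (l₂ * v + 1 - l₂) :=
            mul_le_mul hx1 hy1 hl2 (by linarith)
    · calc (l₂ * u + 1 - l₂) * (l₂ * v + 1 - l₂) ≤ 1 * 1 :=
            mul_le_mul hx2 hy2 (by linarith) zero_le_one
        _ = 1 := one_mul 1
  · intro hz
    obtain ⟨hz1, hz2⟩ := hz
    have hGood : ∀ n, MulGood l₁ l₂ z K ((fun x => l₂ * x + 1 - l₂) '' K) (mulSeq l₁ l₂ z n) := by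
      intro n
      induction n with
      | zero =>
        refine ⟨?_, ?_, ?_, ?_, ?_, ?_, ?_, ?_, ?_, ?_, ?_, ?_⟩ <;>
          dsimp only [mulSeq, Function.iterate_zero_apply]
        · exact le_refl _
        · linarith
        · exact le_refl _
        · linarith
        · exact h₂pos
        · exact h₂pos
        · nlinarith
        · nlinarith
        · nlinarith
        · nlinarith
        · intro x hx
          exact ⟨x, hx, by ring⟩
        · intro x hx
          exact ⟨x, hx, by ring⟩
      | succ n ih =>
        rw [mulSeq_succ]
        exact (mulStep_good l₁ l₂ z K _ h₂pos h₂₁ h₁lt hsum hl hsub1 hsub2 _ ih).1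
    have hstep := fun n =>
      mulStep_good l₁ l₂ z K _ h₂pos h₂₁ h₁lt hsum hl hsub1 hsub2 _ (hGood n)
    have hPmono : Monotone (fun n => (mulSeq l₁ l₂ z n).1) := by
      apply monotone_nat_of_le_succ
      intro n
      rw [mulSeq_succ]
      exact (hstep n).2.1
    have hQmono : Monotone (fun n => (mulSeq l₁ l₂ z n).2.2.1) := by
      apply monotone_nat_of_le_succ
      intro n
      rw [mulSeq_succ]
      exact (hstep n).2.2.2.1
    have hprod : ∀ n, (mulSeq l₁ l₂ z n).2.1 * (mulSeq l₁ l₂ z n).2.2.2 ≤ l₂ * l₂ * l₁ ^ n := by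
      intro n
      induction n with
      | zero =>
        dsimp only [mulSeq, Function.iterate_zero_apply]
        simp
      | succ n ih =>
        rw [mulSeq_succ]
        calc (mulStep l₁ l₂ z (mulSeq l₁ l₂ z n)).2.1 * (mulStep l₁ l₂ z (mulSeq l₁ l₂ z n)).2.2.2
            ≤ l₁ * ((mulSeq l₁ l₂ z n).2.1 * (mulSeq l₁ l₂ z n).2.2.2) := (hstep n).2.2.2.2.2
          _ ≤ l₁ * (l₂ * l₂ * l₁ ^ n) := mul_le_mul_of_nonneg_left ih h₁pos.le
          _ = l₂ * l₂ * l₁ ^ (n + 1) := by ring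
    have hD2 : ∀ n, (mulSeq l₁ l₂ z n).2.1 ^ 2 ≤ l₂ * l₁ ^ n := by
      intro n
      have h1 := (hGood n).hde
      have h2 := (hGood n).hd
      have h3 := hprod n
      nlinarith
    have hE2 : ∀ n, (mulSeq l₁ l₂ z n).2.2.2 ^ 2 ≤ l₂ * l₁ ^ n := by
      intro n
      have h1 := (hGood n).hed
      have h2 := (hGood n).he
      have h3 := hprod n
      nlinarith
    have hsq : ∀ n : ℕ, (Real.sqrt l₂ * Real.sqrt l₁ ^ n) ^ 2 = l₂ * l₁ ^ n := by
      intro n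
      have h1 : Real.sqrt l₂ ^ 2 = l₂ := Real.sq_sqrt h₂pos.le
      have h2 : Real.sqrt l₁ ^ 2 = l₁ := Real.sq_sqrt h₁pos.le
      calc (Real.sqrt l₂ * Real.sqrt l₁ ^ n) ^ 2
          = Real.sqrt l₂ ^ 2 * (Real.sqrt l₁ ^ 2) ^ n := by ring
        _ = l₂ * l₁ ^ n := by rw [h1, h2]
    have hDle : ∀ n, (mulSeq l₁ l₂ z n).2.1 ≤ Real.sqrt l₂ * Real.sqrt l₁ ^ n := by
      intro n
      have hs : 0 ≤ Real.sqrt l₂ * Real.sqrt l₁ ^ n :=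
        mul_nonneg (Real.sqrt_nonneg _) (pow_nonneg (Real.sqrt_nonneg _) _)
      apply le_of_pow_le_pow_left₀ two_ne_zero hs
      rw [hsq n]
      exact hD2 n
    have hEle : ∀ n, (mulSeq l₁ l₂ z n).2.2.2 ≤ Real.sqrt l₂ * Real.sqrt l₁ ^ n := by
      intro n
      have hs : 0 ≤ Real.sqrt l₂ * Real.sqrt l₁ ^ n :=
        mul_nonneg (Real.sqrt_nonneg _) (pow_nonneg (Real.sqrt_nonneg _) _)
      apply le_of_pow_le_pow_left₀ two_ne_zero hs
      rw [hsq n]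
      exact hE2 n
    have hsqrtl1 : Real.sqrt l₁ < 1 := by
      rw [show (1:ℝ) = Real.sqrt 1 from Real.sqrt_one.symm]
      exact Real.sqrt_lt_sqrt h₁pos.le h₁lt
    have hgeo : Filter.Tendsto (fun n => Real.sqrt l₂ * Real.sqrt l₁ ^ n)
        Filter.atTop (nhds 0) := by
      have := (tendsto_pow_atTop_nhds_zero_of_lt_one (Real.sqrt_nonneg l₁) hsqrtl1).const_mul
        (Real.sqrt l₂)
      simpa using this
    have hD0 : Filter.Tendsto (fun n => (mulSeq l₁ l₂ z n).2.1) Filter.atTop (nhds 0) :=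
      squeeze_zero (fun n => (hGood n).hd.le) hDle hgeo
    have hE0 : Filter.Tendsto (fun n => (mulSeq l₁ l₂ z n).2.2.2) Filter.atTop (nhds 0) :=
      squeeze_zero (fun n => (hGood n).he.le) hEle hgeo
    have hPbdd : BddAbove (Set.range fun n => (mulSeq l₁ l₂ z n).1) := by
      refine ⟨1, ?_⟩
      rintro _ ⟨n, rfl⟩
      have h1 := (hGood n).hp2
      have h2 := (hGood n).hd
      dsimp only
      linarith
    have hQbdd : BddAbove (Set.range fun n => (mulSeq l₁ l₂ z n).2.2.1) := by
      refine ⟨1, ?_⟩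
      rintro _ ⟨n, rfl⟩
      have h1 := (hGood n).hq2
      have h2 := (hGood n).he
      dsimp only
      linarith
    have hPa : Filter.Tendsto (fun n => (mulSeq l₁ l₂ z n).1) Filter.atTop
        (nhds (⨆ n, (mulSeq l₁ l₂ z n).1)) := tendsto_atTop_ciSup hPmono hPbdd
    have hQb : Filter.Tendsto (fun n => (mulSeq l₁ l₂ z n).2.2.1) Filter.atTop
        (nhds (⨆ n, (mulSeq l₁ l₂ z n).2.2.1)) := tendsto_atTop_ciSup hQmono hQbdd
    have hPDa : Filter.Tendsto (fun n => (mulSeq l₁ l₂ z n).1 + (mulSeq l₁ l₂ z n).2.1)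
        Filter.atTop (nhds (⨆ n, (mulSeq l₁ l₂ z n).1)) := by
      have := hPa.add hD0
      simpa using this
    have hQEb : Filter.Tendsto (fun n => (mulSeq l₁ l₂ z n).2.2.1 + (mulSeq l₁ l₂ z n).2.2.2)
        Filter.atTop (nhds (⨆ n, (mulSeq l₁ l₂ z n).2.2.1)) := by
      have := hQb.add hE0
      simpa using this
    obtain ⟨x₀, hx₀⟩ := hKne
    have haA : (⨆ n, (mulSeq l₁ l₂ z n).1) ∈ (fun x => l₂ * x + 1 - l₂) '' K := by
      have htend : Filter.Tendsto
          (fun n => (mulSeq l₁ l₂ z n).2.1 * x₀ + (mulSeq l₁ l₂ z n).1)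
          Filter.atTop (nhds (⨆ n, (mulSeq l₁ l₂ z n).1)) := by
        have := (hD0.mul_const x₀).add hPa
        simpa using this
      exact hAc.isClosed.mem_of_tendsto htend
        (Filter.Eventually.of_forall fun n => (hGood n).hmem1 x₀ hx₀)
    have hbA : (⨆ n, (mulSeq l₁ l₂ z n).2.2.1) ∈ (fun x => l₂ * x + 1 - l₂) '' K := by
      have htend : Filter.Tendsto
          (fun n => (mulSeq l₁ l₂ z n).2.2.2 * x₀ + (mulSeq l₁ l₂ z n).2.2.1)
          Filter.atTop (nhds (⨆ n, (mulSeq l₁ l₂ z n).2.2.1)) := by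
        have := (hE0.mul_const x₀).add hQb
        simpa using this
      exact hAc.isClosed.mem_of_tendsto htend
        (Filter.Eventually.of_forall fun n => (hGood n).hmem2 x₀ hx₀)
    have hab_le : (⨆ n, (mulSeq l₁ l₂ z n).1) * (⨆ n, (mulSeq l₁ l₂ z n).2.2.1) ≤ z :=
      le_of_tendsto (hPa.mul hQb) (Filter.Eventually.of_forall fun n => (hGood n).hlow)
    have hz_le : z ≤ (⨆ n, (mulSeq l₁ l₂ z n).1) * (⨆ n, (mulSeq l₁ l₂ z n).2.2.1) :=
      ge_of_tendsto (hPDa.mul hQEb) (Filter.Eventually.of_forall fun n => (hGood n).hhigh)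
    exact ⟨_, haA, _, hbA, (le_antisymm hab_le hz_le).symm⟩
end

section
/- Let 0 < λ_2 ≤ λ_1 < 1 with λ_1 + λ_2 < 1, and let K be the unique nonempty compact set with K = λ_1 K ∪ (λ_2 K + 1 - λ_2). Then K · K = {xy : x, y ∈ K} = (⋃_{i=0}^∞ λ_1^i · (f_2(K) · f_2(K))) ∪ {0}, where f_2(K) = λ_2 K + 1 - λ_2. -/
open Pointwise

/-- For the attractor `K` of the IFS `{x ↦ λ₁x, x ↦ λ₂x + 1 - λ₂}` with `0 < λ₂ ≤ λ₁ < 1` and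
`λ₁ + λ₂ < 1`, one has `K · K = (⋃_{i ∈ ℕ} λ₁^i · (f₂(K) · f₂(K))) ∪ {0}`, where
`f₂(K) = λ₂K + 1 - λ₂`. -/
theorem mul_decomposition (l₁ l₂ : ℝ)
    (h₂pos : 0 < l₂) (h₂₁ : l₂ ≤ l₁) (h₁lt : l₁ < 1) (hsum : l₁ + l₂ < 1)
    (K : Set ℝ) (hKne : K.Nonempty) (hKc : IsCompact K)
    (hKattr : K = (fun x => l₁ * x) '' K ∪ (fun x => l₂ * x + 1 - l₂) '' K) :
    {z : ℝ | ∃ x ∈ K, ∃ y ∈ K, z = x * y} =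
      (⋃ i : ℕ, l₁ ^ i •
        {z : ℝ | ∃ x ∈ (fun x => l₂ * x + 1 - l₂) '' K,
          ∃ y ∈ (fun x => l₂ * x + 1 - l₂) '' K, z = x * y}) ∪ {0} := by
  have h1pos : 0 < l₁ := lt_of_lt_of_le h₂pos h₂₁
  set f₂ : ℝ → ℝ := fun x => l₂ * x + 1 - l₂ with hf₂def
  -- l₁ * K ⊆ K
  have hsub1 : ∀ x ∈ K, l₁ * x ∈ K := by
    intro x hx
    rw [hKattr]
    exact Set.mem_union_left _ ⟨x, hx, rfl⟩
  have hsub2 : ∀ x ∈ K, f₂ x ∈ K := by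
    intro x hx
    rw [hKattr]
    exact Set.mem_union_right _ ⟨x, hx, rfl⟩
  -- powers of l₁ times elements of K stay in K
  have hpow : ∀ (m : ℕ), ∀ x ∈ K, l₁ ^ m * x ∈ K := by
    intro m
    induction m with
    | zero => intro x hx; simpa using hx
    | succ n ih =>
        intro x hx
        have := hsub1 _ (ih x hx)
        have heq : l₁ * (l₁ ^ n * x) = l₁ ^ (n + 1) * x := by ring
        rwa [heq] at this
  -- 0 ∈ K
  have h0K : (0 : ℝ) ∈ K := by
    obtain ⟨x, hx⟩ := hKne
    have hmem : ∀ n : ℕ, l₁ ^ n * x ∈ K := fun n => hpow n x hx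
    have htend : Filter.Tendsto (fun n : ℕ => l₁ ^ n * x) Filter.atTop (nhds 0) := by
      have h1 : Filter.Tendsto (fun n : ℕ => l₁ ^ n) Filter.atTop (nhds 0) :=
        tendsto_pow_atTop_nhds_zero_of_lt_one h1pos.le h₁lt
      simpa using h1.mul_const x
    exact hKc.isClosed.mem_of_tendsto htend (Filter.Eventually.of_forall hmem)
  -- K is bounded
  obtain ⟨r, hr⟩ := hKc.isBounded.subset_closedBall 0
  have hbound : ∀ x ∈ K, |x| ≤ r := by
    intro x hx
    have := hr hx
    simpa [Metric.mem_closedBall, Real.dist_eq] using this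
  -- every element of K is 0 or l₁^m * a for a ∈ f₂ '' K
  have hstep : ∀ (n : ℕ), ∀ x ∈ K,
      (∃ m : ℕ, ∃ a ∈ f₂ '' K, x = l₁ ^ m * a) ∨ ∃ y ∈ K, x = l₁ ^ n * y := by
    intro n
    induction n with
    | zero => intro x hx; exact Or.inr ⟨x, hx, by simp⟩
    | succ n ih =>
        intro x hx
        rcases ih x hx with h | ⟨y, hy, hxy⟩
        · exact Or.inl h
        · have := hy
          rw [hKattr] at this
          rcases this with ⟨z, hz, hzy⟩ | hy2
          · exact Or.inr ⟨z, hz, by rw [hxy, ← hzy]; ring⟩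
          · exact Or.inl ⟨n, y, hy2, hxy⟩
  have hdecomp : ∀ x ∈ K, x ≠ 0 → ∃ m : ℕ, ∃ a ∈ f₂ '' K, x = l₁ ^ m * a := by
    intro x hx hx0
    have hxpos : 0 < |x| := abs_pos.mpr hx0
    have hrpos : 0 < r := lt_of_lt_of_le hxpos (hbound x hx)
    obtain ⟨n, hn⟩ := exists_pow_lt_of_lt_one (div_pos hxpos hrpos) h₁lt
    rcases hstep n x hx with h | ⟨y, hy, hxy⟩
    · exact h
    · exfalso
      have : |x| ≤ l₁ ^ n * r := by
        rw [hxy, abs_mul, abs_of_pos (pow_pos h1pos n)]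
        exact mul_le_mul_of_nonneg_left (hbound y hy) (pow_pos h1pos n).le
      have hlt : l₁ ^ n * r < |x| := (lt_div_iff₀ hrpos).mp hn
      linarith
  ext z
  simp only [Set.mem_setOf_eq, Set.mem_union, Set.mem_iUnion, Set.mem_singleton_iff]
  constructor
  · rintro ⟨x, hx, y, hy, rfl⟩
    by_cases hx0 : x = 0
    · exact Or.inr (by simp [hx0])
    by_cases hy0 : y = 0
    · exact Or.inr (by simp [hy0])
    obtain ⟨m, a, ha, hxa⟩ := hdecomp x hx hx0
    obtain ⟨k, b, hb, hyb⟩ := hdecomp y hy hy0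
    refine Or.inl ⟨m + k, ?_⟩
    rw [Set.mem_smul_set]
    exact ⟨a * b, ⟨a, ha, b, hb, rfl⟩, by rw [hxa, hyb, smul_eq_mul]; ring⟩
  · rintro (⟨i, hz⟩ | rfl)
    · rw [Set.mem_smul_set] at hz
      obtain ⟨w, ⟨a, ha, b, hb, rfl⟩, hzw⟩ := hz
      obtain ⟨a', ha', rfl⟩ := ha
      obtain ⟨b', hb', rfl⟩ := hb
      have haK : f₂ a' ∈ K := hsub2 a' ha'
      have hbK : f₂ b' ∈ K := hsub2 b' hb'
      exact ⟨l₁ ^ i * f₂ a', hpow i _ haK, f₂ b', hbK, by rw [← hzw, smul_eq_mul]; ring⟩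
    · exact ⟨0, h0K, 0, h0K, by ring⟩
end

section
/- Let 0 < λ_2 ≤ λ_1 < 1 with λ_1 + λ2 < 1 and λ_1 < (1-λ_2)², and let K be the unique nonempty compact set with K = λ_1 K ∪ (λ_2 K + 1 - λ_2). Then K ÷ K = {x/y : x, y ∈ K, y ≠ 0} is contained in (⋃_{n ∈ ℤ} λ_1^n · [1-λ_2, 1/(1-λ_2)]) ∪ {0}, and the consecutive intervals λ_1^n[1-λ_2, 1/(1-λ_2)] and λ_1^{n+1}[1-λ_2, 1/(1-λ_2)] are disjoint; in particular K ÷ K ≠ ℝ. -/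
/-!
Comparing the least and greatest points of `K` with their preimages under the two maps shows
`K ⊆ [0, 1]`. A point `x ∈ K` with `x > λ₁^N` unfolds, within `N` steps of
`K ⊆ f₁ K ∪ f₂ K`, as `λ₁ⁿ f₂(x')` with `f₂(x') ∈ [1 - λ₂, 1]`; so every nonzero point of `K`
lies in some `λ₁ⁿ [1 - λ₂, 1]`, and a quotient of two of them in `λ₁^(m-n) [1 - λ₂, 1/(1 - λ₂)]`.
The condition `λ₁ < (1 - λ₂)²` says `λ₁ / (1 - λ₂) < 1 - λ₂`: consecutive scaled intervals are
separated by a gap, and the gap `(λ₁ / (1 - λ₂), 1 - λ₂)` misses `K ÷ K`.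
-/

open Pointwise

open Set

section Attractor

variable {l₁ l₂ : ℝ} {K : Set ℝ}

theorem subset_Icc_zero_one_of_subset_image_union (hl₁ : 0 ≤ l₁) (hl₁1 : l₁ < 1)
    (hl₂ : 0 ≤ l₂) (hl₂1 : l₂ < 1) (hKc : IsCompact K)
    (hK : K ⊆ (fun x => l₁ * x) '' K ∪ (fun x => l₂ * x + 1 - l₂) '' K) :
    K ⊆ Icc 0 1 := by
  rcases K.eq_empty_or_nonempty with rfl | hKne
  · exact empty_subset _
  obtain ⟨m, hmK, hm⟩ := hKc.exists_isLeast hKne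
  obtain ⟨M, hMK, hM⟩ := hKc.exists_isGreatest hKne
  have hm0 : 0 ≤ m := by
    rcases hK hmK with ⟨x, hx, rfl⟩ | ⟨x, hx, rfl⟩ <;> nlinarith [hm hx]
  have hM1 : M ≤ 1 := by
    rcases hK hMK with ⟨x, hx, rfl⟩ | ⟨x, hx, rfl⟩ <;> nlinarith [hM hx, hm hx]
  exact fun x hx => ⟨hm0.trans (hm hx), (hM hx).trans hM1⟩

theorem exists_pow_smul_Icc_of_pow_lt (hl₁ : 0 ≤ l₁) (hl₂ : 0 ≤ l₂) (hK01 : K ⊆ Icc 0 1)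
    (hK : K ⊆ (fun x => l₁ * x) '' K ∪ (fun x => l₂ * x + 1 - l₂) '' K) (N : ℕ) :
    ∀ x ∈ K, l₁ ^ N < x → ∃ n : ℕ, x ∈ l₁ ^ n • Icc (1 - l₂) 1 := by
  induction N with
  | zero => exact fun x hx hlt => absurd (hK01 hx).2 (by simpa using hlt)
  | succ N ih =>
    rintro _ hx hlt
    rcases hK hx with ⟨x, hxK, rfl⟩ | ⟨x, hxK, rfl⟩
    · have hN : l₁ ^ N < x := by
        rw [pow_succ] at hlt
        nlinarith
      obtain ⟨n, hn⟩ := ih x hxK hN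
      refine ⟨n + 1, ?_⟩
      rw [pow_succ, mul_comm _ l₁, mul_smul]
      exact smul_mem_smul_set hn
    · refine ⟨0, ?_⟩
      have := hK01 hxK
      rw [pow_zero, one_smul]
      constructor <;> nlinarith [this.1, this.2]

theorem exists_pow_smul_Icc_of_ne_zero (hl₁ : 0 ≤ l₁) (hl₁1 : l₁ < 1) (hl₂ : 0 ≤ l₂)
    (hK01 : K ⊆ Icc 0 1)
    (hK : K ⊆ (fun x => l₁ * x) '' K ∪ (fun x => l₂ * x + 1 - l₂) '' K) {x : ℝ} (hx : x ∈ K)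
    (hx0 : x ≠ 0) : ∃ n : ℕ, x ∈ l₁ ^ n • Icc (1 - l₂) 1 := by
  obtain ⟨N, hN⟩ := exists_pow_lt_of_lt_one ((hK01 hx).1.lt_of_ne' hx0) hl₁1
  exact exists_pow_smul_Icc_of_pow_lt hl₁ hl₂ hK01 hK N x hx hN

end Attractor

theorem div_mem_div_smul_Icc {a c d x y : ℝ} (ha : 0 < a) (hd : 0 < d)
    (hx : x ∈ c • Icc a 1) (hy : y ∈ d • Icc a 1) : x / y ∈ (c / d) • Icc a (1 / a) := by
  obtain ⟨u, ⟨hau, hu1⟩, rfl⟩ := hx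
  obtain ⟨v, ⟨hav, hv1⟩, rfl⟩ := hy
  have hv : 0 < v := ha.trans_le hav
  refine ⟨u / v, ⟨?_, ?_⟩, ?_⟩
  · rw [le_div_iff₀ hv]; nlinarith
  · rw [div_le_div_iff₀ hv ha]; nlinarith
  · simp only [smul_eq_mul]; field_simp

theorem smul_Icc_inter_mul_smul_Icc_eq_empty {a c r : ℝ} (ha : 0 < a) (hc : 0 < c) (hr : 0 ≤ r)
    (hra : r < a ^ 2) : c • Icc a (1 / a) ∩ (c * r) • Icc a (1 / a) = ∅ := by
  refine eq_empty_of_forall_notMem ?_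
  rintro _ ⟨⟨u, ⟨hau, -⟩, rfl⟩, ⟨v, ⟨-, hva⟩, huv⟩⟩
  simp only [smul_eq_mul] at huv
  have : c * a ≤ c * r * (1 / a) :=
    calc c * a ≤ c * u := mul_le_mul_of_nonneg_left hau hc.le
      _ = c * r * v := huv.symm
      _ ≤ c * r * (1 / a) := mul_le_mul_of_nonneg_left hva (by positivity)
  rw [mul_one_div, le_div_iff₀ ha] at this
  nlinarith

theorem notMem_iUnion_zpow_smul_Icc {a r t : ℝ} (hr : 0 < r) (hr1 : r < 1) (ha : 0 < a)
    (hrt : r / a < t) (hta : t < a) : t ∉ ⋃ n : ℤ, r ^ n • Icc a (1 / a) := by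
  simp only [mem_iUnion, not_exists]
  rintro n ⟨u, ⟨hau, hua⟩, rfl⟩
  simp only [smul_eq_mul] at hrt hta
  have hrn : 0 < r ^ n := zpow_pos hr n
  rcases le_or_gt n 0 with hn | hn
  · nlinarith [one_le_zpow_of_nonpos₀ hr hr1.le hn]
  · have : r ^ n ≤ r := by
      simpa using zpow_le_zpow_right_of_le_one₀ hr hr1.le (by omega : (1 : ℤ) ≤ n)
    have : r ^ n * u ≤ r * (1 / a) := mul_le_mul this hua (ha.le.trans hau) hr.le
    rw [mul_one_div] at this
    linarith

theorem div_not_all_general (l₁ l₂ : ℝ)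
    (h₂pos : 0 < l₂) (h₂₁ : l₂ ≤ l₁) (h₁lt : l₁ < 1)
    (hl : l₁ < (1 - l₂) ^ 2)
    (K : Set ℝ) (hKc : IsCompact K)
    (hKattr : K = (fun x => l₁ * x) '' K ∪ (fun x => l₂ * x + 1 - l₂) '' K) :
    {z : ℝ | ∃ x ∈ K, ∃ y ∈ K, y ≠ 0 ∧ z = x / y} ⊆
      (⋃ n : ℤ, l₁ ^ n • Set.Icc (1 - l₂) (1 / (1 - l₂))) ∪ {0} ∧
    (∀ n : ℤ, (l₁ ^ n • Set.Icc (1 - l₂) (1 / (1 - l₂))) ∩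
        (l₁ ^ (n + 1) • Set.Icc (1 - l₂) (1 / (1 - l₂))) = ∅) ∧
    {z : ℝ | ∃ x ∈ K, ∃ y ∈ K, y ≠ 0 ∧ z = x / y} ≠ Set.univ := by
  have h₁pos : 0 < l₁ := h₂pos.trans_le h₂₁
  have hμ : 0 < 1 - l₂ := by linarith
  have hK01 := subset_Icc_zero_one_of_subset_image_union h₁pos.le h₁lt h₂pos.le (by linarith)
    hKc hKattr.le
  have hquot : {z : ℝ | ∃ x ∈ K, ∃ y ∈ K, y ≠ 0 ∧ z = x / y} ⊆
      (⋃ n : ℤ, l₁ ^ n • Icc (1 - l₂) (1 / (1 - l₂))) ∪ {0} := by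
    rintro _ ⟨x, hx, y, hy, hy0, rfl⟩
    rcases eq_or_ne x 0 with rfl | hx0
    · exact Or.inr (zero_div y)
    obtain ⟨m, hm⟩ := exists_pow_smul_Icc_of_ne_zero h₁pos.le h₁lt h₂pos.le hK01 hKattr.le hx hx0
    obtain ⟨n, hn⟩ := exists_pow_smul_Icc_of_ne_zero h₁pos.le h₁lt h₂pos.le hK01 hKattr.le hy hy0
    refine Or.inl (mem_iUnion.2 ⟨m - n, ?_⟩)
    rw [zpow_sub₀ h₁pos.ne', zpow_natCast, zpow_natCast]
    exact div_mem_div_smul_Icc hμ (pow_pos h₁pos n) hm hn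
  refine ⟨hquot, fun n => ?_, fun huniv => ?_⟩
  · rw [zpow_add_one₀ h₁pos.ne']
    exact smul_Icc_inter_mul_smul_Icc_eq_empty hμ (zpow_pos h₁pos n) h₁pos.le hl
  · have hgap : l₁ / (1 - l₂) < 1 - l₂ := by rwa [div_lt_iff₀ hμ, ← sq]
    obtain ⟨t, hlt, htl⟩ := exists_between hgap
    rcases hquot (huniv ▸ mem_univ t) with ht | ht
    · exact notMem_iUnion_zpow_smul_Icc h₁pos h₁lt hμ hlt htl ht
    · exact (ht ▸ hlt).not_ge (div_pos h₁pos hμ).le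

/-- For the attractor `K` of the IFS `{x ↦ λ₁x, x ↦ λ₂x + 1 - λ₂}` with `0 < λ₂ ≤ λ₁ < 1`,
`λ₁ + λ₂ < 1` and `λ₁ < (1 - λ₂)²`: the quotient set `K ÷ K` is contained in
`(⋃_{n ∈ ℤ} λ₁^n · [1 - λ₂, 1/(1 - λ₂)]) ∪ {0}`, consecutive scaled intervals are disjoint,
and in particular `K ÷ K ≠ ℝ`. -/
theorem div_not_all (l₁ l₂ : ℝ)
    (h₂pos : 0 < l₂) (h₂₁ : l₂ ≤ l₁) (h₁lt : l₁ < 1) (hsum : l₁ + l₂ < 1)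
    (hl : l₁ < (1 - l₂) ^ 2)
    (K : Set ℝ) (hKne : K.Nonempty) (hKc : IsCompact K)
    (hKattr : K = (fun x => l₁ * x) '' K ∪ (fun x => l₂ * x + 1 - l₂) '' K) :
    {z : ℝ | ∃ x ∈ K, ∃ y ∈ K, y ≠ 0 ∧ z = x / y} ⊆
      (⋃ n : ℤ, l₁ ^ n • Set.Icc (1 - l₂) (1 / (1 - l₂))) ∪ {0} ∧
    (∀ n : ℤ, (l₁ ^ n • Set.Icc (1 - l₂) (1 / (1 - l₂))) ∩
        (l₁ ^ (n + 1) • Set.Icc (1 - l₂) (1 / (1 - l₂))) = ∅) ∧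
    {z : ℝ | ∃ x ∈ K, ∃ y ∈ K, y ≠ 0 ∧ z = x / y} ≠ Set.univ :=
  div_not_all_general l₁ l₂ h₂pos h₂₁ h₁lt hl K hKc hKattr
end
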